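/- arXiv:2301.04365 — 9 statements merged into one kernel-verified Lean document; each statement's English description precedes it below -/
import Mathlib

section
/- The interval [1/7, 3/7] equals the union over m in {2,3,4} of T_m([1/7,3/7]), i.e. [1/7,3/7] is the attractor of the iterated function system {T_2, T_3, T_4}. -/
open Filter Set MeasureTheory

noncomputable def T (m : ℕ) (x : ℝ) : ℝ := (1 - x) / m

theorem stmt2 : Set.Icc (1/7 : ℝ) (3/7) =
    ⋃ m ∈ ({2, 3, 4} : Set ℕ), T m '' Set.Icc (1/7 : ℝ) (3/7) := by
  ext x
  simp only [Set.mem_iUnion, Set.mem_insert_iff, Set.mem_singleton_iff, Set.mem_image,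
    Set.mem_Icc, exists_prop]
  constructor
  · rintro ⟨h1, h2⟩
    by_cases hx4 : x ≤ 3/14
    · exact ⟨4, by norm_num, 1 - 4*x, ⟨by linarith, by linarith⟩, by simp [T]⟩
    by_cases hx3 : x ≤ 2/7
    · exact ⟨3, by norm_num, 1 - 3*x, ⟨by linarith, by linarith⟩, by simp [T]⟩
    · exact ⟨2, by norm_num, 1 - 2*x, ⟨by linarith, by linarith⟩, by simp [T]⟩
  · rintro ⟨m, hm, y, ⟨hy1, hy2⟩, rfl⟩
    rcases hm with rfl | rfl | rfl <;>
      simp only [T] <;> norm_num <;> constructor <;> linarith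
end

section
/- Let f_1,...,f_n : ℝ → ℝ be contractions with Lipschitz constants c_1,...,c_n satisfying c_1 + ... + c_n < 1, and let Λ be the attractor of this iterated function system. Then the Lebesgue measure of Λ is zero. -/
open Filter Set MeasureTheory

theorem stmt4 (n : ℕ) (f : Fin n → ℝ → ℝ) (c : Fin n → ℝ)
    (hc : ∀ i, 0 < c i ∧ c i < 1)
    (hlip : ∀ i x y, |f i x - f i y| ≤ c i * |x - y|)
    (hsum : ∑ i, c i < 1)
    (Λ : Set ℝ) (hne : Λ.Nonempty) (hcomp : IsCompact Λ)
    (hattr : Λ = ⋃ i, f i '' Λ) :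
    volume Λ = 0 := by
  -- each f i is Lipschitz
  have hLip : ∀ i, LipschitzWith (c i).toNNReal (f i) := by
    intro i
    refine LipschitzWith.of_dist_le_mul ?_
    intro x y
    simpa [Real.dist_eq, Real.coe_toNNReal _ (hc i).1.le] using hlip i x y
  have himg : ∀ i, volume (f i '' Λ) ≤ ENNReal.ofReal (c i) * volume Λ := by
    intro i
    have := (hLip i).hausdorffMeasure_image_le (d := 1) zero_le_one Λ
    rw [MeasureTheory.hausdorffMeasure_real] at this
    simpa [ENNReal.ofReal, ENNReal.rpow_one] using this
  have hfin : volume Λ ≠ ⊤ := hcomp.measure_ne_top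
  have hle : volume Λ ≤ (∑ i, ENNReal.ofReal (c i)) * volume Λ := by
    calc volume Λ = volume (⋃ i, f i '' Λ) := by rw [← hattr]
      _ ≤ ∑ i, volume (f i '' Λ) := measure_iUnion_fintype_le _ _
      _ ≤ ∑ i, ENNReal.ofReal (c i) * volume Λ := Finset.sum_le_sum fun i _ => himg i
      _ = (∑ i, ENNReal.ofReal (c i)) * volume Λ := (Finset.sum_mul _ _ _).symm
  have hR : (∑ i, ENNReal.ofReal (c i)) < 1 := by
    rw [← ENNReal.ofReal_sum_of_nonneg fun i _ => (hc i).1.le]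
    calc ENNReal.ofReal (∑ i, c i) < ENNReal.ofReal 1 :=
          (ENNReal.ofReal_lt_ofReal_iff (by norm_num)).2 hsum
      _ = 1 := ENNReal.ofReal_one
  by_contra h0
  have : (∑ i, ENNReal.ofReal (c i)) * volume Λ < 1 * volume Λ :=
    by rw [mul_comm _ (volume Λ), mul_comm 1 (volume Λ)]; exact ENNReal.mul_lt_mul_right h0 hfin hR
  rw [one_mul] at this
  exact absurd (hle.trans_lt this) (lt_irrefl _)
end

section
/- Let K ≥ 2 be an integer and let (m_i) be a sequence of integers ≥ 2 such that m_i ∈ {2,...,K} for all but finitely many i. Then liminf and limsup as n → ∞ of T_{m_n}∘T_{m_{n-1}}∘...∘T_{m_1}(0) both lie in the interval [1/(2K-1), (K-1)/(2K-1)]. -/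
open Filter Set MeasureTheory

noncomputable def orb (m : ℕ → ℕ) : ℕ → ℝ
  | 0 => 0
  | n + 1 => T (m n) (orb m n)

noncomputable def Lset : Set ℝ :=
  {x | ∃ m : ℕ → ℕ, (∀ i, 2 ≤ m i) ∧ Filter.atTop.liminf (fun n => orb m n) = x}

theorem stmt7 (K : ℕ) (hK : 2 ≤ K) (m : ℕ → ℕ) (hm : ∀ i, 2 ≤ m i)
    (hev : ∀ᶠ i in Filter.atTop, m i ≤ K) :
    Filter.atTop.liminf (fun n => orb m n) ∈
        Set.Icc (1 / (2 * (K : ℝ) - 1)) (((K : ℝ) - 1) / (2 * (K : ℝ) - 1)) ∧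
      Filter.atTop.limsup (fun n => orb m n) ∈
        Set.Icc (1 / (2 * (K : ℝ) - 1)) (((K : ℝ) - 1) / (2 * (K : ℝ) - 1)) := by
  set x : ℕ → ℝ := fun n => orb m n with hx
  have hbd : ∀ n, 0 ≤ x n ∧ x n ≤ 1 := by
    intro n
    induction n with
    | zero => simp [hx, orb]
    | succ n ih =>
      have hm2 : (2:ℝ) ≤ (m n : ℝ) := by exact_mod_cast hm n
      have hmpos : (0:ℝ) < (m n : ℝ) := by linarith
      have h1 : x (n+1) = (1 - x n) / (m n) := rfl
      constructor
      · rw [h1]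
        apply div_nonneg (by linarith [ih.2]) (by linarith)
      · rw [h1, div_le_one hmpos]
        linarith [ih.1]
  have hbd0 : ∀ n, 0 ≤ x n := fun n => (hbd n).1
  have hbd1 : ∀ n, x n ≤ 1 := fun n => (hbd n).2
  have hba : IsBoundedUnder (· ≤ ·) atTop x := isBoundedUnder_of ⟨1, hbd1⟩
  have hbb : IsBoundedUnder (· ≥ ·) atTop x := isBoundedUnder_of ⟨0, hbd0⟩
  have hca : IsCoboundedUnder (· ≤ ·) atTop x := hbb.isCoboundedUnder_le
  have hcb : IsCoboundedUnder (· ≥ ·) atTop x := hba.isCoboundedUnder_ge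
  set L := Filter.atTop.liminf x with hL
  set S := Filter.atTop.limsup x with hS
  have hLS : L ≤ S := liminf_le_limsup hba hbb
  have hKR : (2:ℝ) ≤ (K:ℝ) := by exact_mod_cast hK
  have hKpos : (0:ℝ) < (K:ℝ) := by linarith
  have hL0 : 0 ≤ L := le_liminf_of_le hcb (Eventually.of_forall hbd0)
  have hS1 : S ≤ 1 := limsup_le_of_le hca (Eventually.of_forall hbd1)
  -- key estimate 1 : S ≤ (1 - L)/2
  have key1 : S ≤ (1 - L) / 2 := by
    apply le_of_forall_pos_le_add
    intro ε hε
    have hlt : ∀ᶠ n in atTop, L - ε < x n :=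
      eventually_lt_of_lt_liminf (by linarith) hbb
    have hshift : S = Filter.atTop.limsup (fun n => x (n + 1)) :=
      (limsup_nat_add x 1).symm
    rw [hshift]
    have hb' : IsBoundedUnder (· ≥ ·) atTop (fun n => x (n+1)) :=
      isBoundedUnder_of ⟨0, fun n => hbd0 (n+1)⟩
    apply limsup_le_of_le hb'.isCoboundedUnder_le
    filter_upwards [hlt] with n hn
    have hm2 : (2:ℝ) ≤ (m n : ℝ) := by exact_mod_cast hm n
    have h1 : x (n+1) = (1 - x n) / (m n) := rfl
    have h2 : (1 - x n) / (m n) ≤ (1 - x n) / 2 := by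
      gcongr
      linarith [hbd1 n]
    rw [h1]
    calc (1 - x n) / (m n) ≤ (1 - x n) / 2 := h2
      _ ≤ (1 - (L - ε)) / 2 := by linarith
      _ ≤ (1 - L) / 2 + ε := by linarith
  -- key estimate 2 : (1 - S)/K ≤ L
  have key2 : (1 - S) / K ≤ L := by
    apply le_of_forall_pos_le_add
    intro ε hε
    have hlt : ∀ᶠ n in atTop, x n < S + ε :=
      eventually_lt_of_limsup_lt (by linarith) hba
    have hshift : L = Filter.atTop.liminf (fun n => x (n + 1)) :=
      (liminf_nat_add x 1).symm
    have hmain : (1 - S) / K - ε ≤ Filter.atTop.liminf (fun n => x (n + 1)) := by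
      have hb' : IsBoundedUnder (· ≤ ·) atTop (fun n => x (n+1)) :=
        isBoundedUnder_of ⟨1, fun n => hbd1 (n+1)⟩
      apply le_liminf_of_le hb'.isCoboundedUnder_ge
      filter_upwards [hlt, hev] with n hn hKn
      have hKn' : (m n : ℝ) ≤ (K : ℝ) := by exact_mod_cast hKn
      have hm2 : (2:ℝ) ≤ (m n : ℝ) := by exact_mod_cast hm n
      have h1 : x (n+1) = (1 - x n) / (m n) := rfl
      rw [h1]
      have h2 : (1 - x n) / (K : ℝ) ≤ (1 - x n) / (m n) := by
        gcongr
        linarith [hbd1 n]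
      have h3 : (1 - (S + ε)) / (K:ℝ) ≤ (1 - x n) / K := by
        gcongr
      have h4 : (1 - S) / (K:ℝ) - ε ≤ (1 - (S + ε)) / K := by
        have hεK : ε / (K:ℝ) ≤ ε := by
          rw [div_le_iff₀ hKpos]; nlinarith
        have h5 : (1 - (S + ε)) / (K:ℝ) = (1 - S) / K - ε / K := by ring
        linarith
      linarith
    rw [hshift]
    linarith
  -- algebra
  have hD : (0:ℝ) < 2 * (K:ℝ) - 1 := by linarith
  have hKL : (1 - S) ≤ K * L := by
    rw [div_le_iff₀ hKpos] at key2; linarith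
  have hlb : 1 / (2 * (K : ℝ) - 1) ≤ L := by
    rw [div_le_iff₀ hD]; nlinarith
  have hub : S ≤ ((K : ℝ) - 1) / (2 * (K : ℝ) - 1) := by
    rw [le_div_iff₀ hD]; nlinarith
  exact ⟨⟨hlb, le_trans hLS hub⟩, ⟨le_trans hlb hLS, hub⟩⟩
end

section
/- Let K ≥ 2 be an integer and let (m_i) be a sequence of integers ≥ 2 with m_i ≥ K for infinitely many i. Then liminf_{k→∞} T_{m_k}∘...∘T_{m_1}(0) ≤ 1/(K+1). -/
open Filter Set MeasureTheory

lemma orb_bounds (m : ℕ → ℕ) (hm : ∀ i, 2 ≤ m i) :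
    ∀ n, 0 ≤ orb m n ∧ orb m n ≤ 1 := by
  intro n
  induction n with
  | zero => simp [orb]
  | succ n ih =>
    obtain ⟨h0, h1⟩ := ih
    have hmn : (2 : ℝ) ≤ (m n : ℝ) := by exact_mod_cast hm n
    have hmpos : (0 : ℝ) < (m n : ℝ) := by linarith
    refine ⟨div_nonneg (by linarith) hmpos.le, ?_⟩
    show (1 - orb m n) / (m n : ℝ) ≤ 1
    rw [div_le_one hmpos]
    linarith

theorem stmt8 (K : ℕ) (hK : 2 ≤ K) (m : ℕ → ℕ) (hm : ∀ i, 2 ≤ m i)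
    (hinf : ∀ N, ∃ i, N ≤ i ∧ K ≤ m i) :
    Filter.atTop.liminf (fun n => orb m n) ≤ 1 / ((K : ℝ) + 1) := by
  have hKpos : (0 : ℝ) < (K : ℝ) := by positivity
  have hfreq : ∃ᶠ n in atTop, orb m n ≤ 1 / ((K : ℝ) + 1) := by
    rw [frequently_atTop]
    intro N
    obtain ⟨i, hiN, hiK⟩ := hinf N
    obtain ⟨h0, h1⟩ := orb_bounds m hm i
    by_cases hc : orb m i ≤ 1 / ((K : ℝ) + 1)
    · exact ⟨i, hiN, hc⟩
    · push_neg at hc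
      refine ⟨i + 1, by omega, ?_⟩
      have hKm : (K : ℝ) ≤ (m i : ℝ) := by exact_mod_cast hiK
      have hmpos : (0 : ℝ) < (m i : ℝ) := by linarith
      show (1 - orb m i) / (m i : ℝ) ≤ 1 / ((K : ℝ) + 1)
      have h2 : (1 - orb m i) / (m i : ℝ) ≤ (1 - orb m i) / (K : ℝ) :=
        div_le_div_of_nonneg_left (by linarith) hKpos hKm
      have h3 : (1 - orb m i) / (K : ℝ) ≤ (1 - 1 / ((K : ℝ) + 1)) / (K : ℝ) := by
        gcongr
      have h4 : (1 - 1 / ((K : ℝ) + 1)) / (K : ℝ) = 1 / ((K : ℝ) + 1) := by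
        field_simp
        ring
      linarith
  refine liminf_le_of_frequently_le hfreq ?_
  exact isBoundedUnder_of ⟨0, fun n => (orb_bounds m hm n).1⟩
end

section
/- The set 𝓛 = { liminf_{k→∞} T_{m_k}∘...∘T_{m_1}(0) : (m_i) ∈ (ℤ_{≥2})^ℕ } is a closed subset of ℝ. -/
open Filter Set MeasureTheory

lemma orb_succ (m : ℕ → ℕ) (n : ℕ) : orb m (n + 1) = T (m n) (orb m n) := rfl

lemma T_mem {m : ℕ} (hm : 2 ≤ m) {x : ℝ} (hx : x ∈ Icc (0:ℝ) (1/2)) :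
    T m x ∈ Icc (0:ℝ) (1/2) := by
  have hm' : (2:ℝ) ≤ m := by exact_mod_cast hm
  obtain ⟨h0, h1⟩ := hx
  constructor
  · apply div_nonneg <;> linarith
  · rw [T, div_le_iff₀ (by linarith)]
    nlinarith

lemma orb_mem {m : ℕ → ℕ} (hm : ∀ i, 2 ≤ m i) : ∀ n, orb m n ∈ Icc (0:ℝ) (1/2)
  | 0 => by rw [show orb m 0 = 0 from rfl]; constructor <;> norm_num
  | n + 1 => T_mem (hm n) (orb_mem hm n)

lemma T_contr {k : ℕ} (hk : 2 ≤ k) (x y : ℝ) : |T k x - T k y| ≤ |x - y| / 2 := by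
  have hk' : (2:ℝ) ≤ k := by exact_mod_cast hk
  have h : T k x - T k y = (y - x) / k := by
    simp only [T]; ring
  rw [h, abs_div, Nat.abs_cast, abs_sub_comm]
  gcongr

lemma shadow {M m' : ℕ → ℕ} (hM : ∀ i, 2 ≤ M i) {s a L : ℕ}
    (hag : ∀ t, t < L → M (s + t) = m' (a + t)) :
    ∀ t, t ≤ L → |orb M (s + t) - orb m' (a + t)| ≤ |orb M s - orb m' a| / 2 ^ t := by
  intro t
  induction t with
  | zero => intro _; simp
  | succ t ih =>
    intro ht
    have ht' : t < L := by omega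
    have h1 := ih (by omega)
    have e1 : s + (t + 1) = (s + t) + 1 := by omega
    have e2 : a + (t + 1) = (a + t) + 1 := by omega
    rw [e1, e2, orb_succ, orb_succ, hag t ht']
    calc |T (m' (a+t)) (orb M (s+t)) - T (m' (a+t)) (orb m' (a+t))|
        ≤ |orb M (s+t) - orb m' (a+t)| / 2 := T_contr (by rw [← hag t ht']; exact hM _) _ _
      _ ≤ (|orb M s - orb m' a| / 2 ^ t) / 2 := by linarith
      _ = |orb M s - orb m' a| / 2 ^ (t + 1) := by ring

lemma bdd_ge {m : ℕ → ℕ} (hm : ∀ i, 2 ≤ m i) :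
    Filter.atTop.IsBoundedUnder (· ≥ ·) (fun n => orb m n) :=
  isBoundedUnder_of ⟨0, fun n => (orb_mem hm n).1⟩

lemma bdd_le {m : ℕ → ℕ} (hm : ∀ i, 2 ≤ m i) :
    Filter.atTop.IsBoundedUnder (· ≤ ·) (fun n => orb m n) :=
  isBoundedUnder_of ⟨1/2, fun n => (orb_mem hm n).2⟩

lemma extract {m : ℕ → ℕ} (hm : ∀ i, 2 ≤ m i) {L : ℝ}
    (hL : Filter.atTop.liminf (fun n => orb m n) = L) {ε : ℝ} (hε : 0 < ε) (len : ℕ) :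
    ∃ a b : ℕ, a + len ≤ b ∧ (∀ n, a ≤ n → L - ε < orb m n) ∧
      orb m a < L + ε ∧ orb m b < L + ε := by
  have hev : ∀ᶠ n in atTop, L - ε < orb m n :=
    eventually_lt_of_lt_liminf (by rw [hL]; linarith) (bdd_ge hm)
  have hfr : ∃ᶠ n in atTop, orb m n < L + ε :=
    frequently_lt_of_liminf_lt ((bdd_le hm).isCoboundedUnder_ge) (by rw [hL]; linarith)
  obtain ⟨K, hK⟩ := eventually_atTop.1 hev
  obtain ⟨a, ha1, ha2⟩ := (frequently_atTop.1 hfr) K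
  obtain ⟨b, hb1, hb2⟩ := (frequently_atTop.1 hfr) (a + len)
  exact ⟨a, b, hb1, fun n hn => hK n (le_trans ha1 hn), ha2, hb2⟩

theorem stmt10 : IsClosed Lset := by
  apply IsSeqClosed.isClosed
  intro x L hx hlim
  simp only [Lset, mem_setOf_eq] at hx ⊢
  choose ms hms hLs using hx
  -- ε_j = (1/2)^j
  set εr : ℕ → ℝ := fun j => (1/2 : ℝ) ^ j with hεrdef
  have hεrpos : ∀ j, 0 < εr j := fun j => pow_pos (by norm_num) j
  have hεr0 : Tendsto εr atTop (nhds 0) := by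
    apply tendsto_pow_atTop_nhds_zero_of_lt_one <;> norm_num
  choose a b hab hlow ha hb using fun j => extract (hms j) (hLs j) (hεrpos j) (j + 1)
  set ℓ : ℕ → ℕ := fun j => b j - a j with hℓdef
  have hℓ : ∀ j, j + 1 ≤ ℓ j := fun j => by have := hab j; simp only [hℓdef]; omega
  have hba : ∀ j, a j + ℓ j = b j := fun j => by have := hab j; simp only [hℓdef]; omega
  set S : ℕ → ℕ := fun j => ∑ i ∈ Finset.range j, ℓ i with hSdef
  have hSsucc : ∀ j, S (j + 1) = S j + ℓ j := fun j => Finset.sum_range_succ _ _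
  have hSmono : ∀ i j, i ≤ j → S i ≤ S j := fun i j hij =>
    Finset.sum_le_sum_of_subset (Finset.range_subset_range.2 hij)
  have hSge : ∀ j, j ≤ S j := by
    intro j
    calc j = ∑ _i ∈ Finset.range j, 1 := by simp
      _ ≤ S j := Finset.sum_le_sum (fun i _ => by have := hℓ i; omega)
  have hJex : ∀ n, ∃ j, n < S (j + 1) := fun n =>
    ⟨n, lt_of_lt_of_le (Nat.lt_succ_self n) (hSge (n + 1))⟩
  set J : ℕ → ℕ := fun n => Nat.find (hJex n) with hJdef
  have hJ1 : ∀ n, n < S (J n + 1) := fun n => Nat.find_spec (hJex n)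
  have hJ2 : ∀ n, S (J n) ≤ n := by
    intro n
    rcases Nat.eq_zero_or_pos (J n) with h | h
    · rw [h]; simp [hSdef]
    · have h3 : ¬ (n < S ((J n - 1) + 1)) := Nat.find_min (hJex n) (show J n - 1 < J n by omega)
      rw [show J n - 1 + 1 = J n from by omega] at h3
      omega
  have hJeq : ∀ j n, S j ≤ n → n < S (j + 1) → J n = j := by
    intro j n h1 h2
    by_contra hne
    rcases lt_or_gt_of_ne hne with h | h
    · have := hSmono (J n + 1) j h
      have := hJ1 n
      omega
    · exact (Nat.find_min (hJex n) h : ¬ (n < S (j + 1))) h2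
  set M : ℕ → ℕ := fun n => ms (J n) (a (J n) + (n - S (J n))) with hMdef
  have hM2 : ∀ i, 2 ≤ M i := fun i => hms _ _
  have hMblk : ∀ j t, t < ℓ j → M (S j + t) = ms j (a j + t) := by
    intro j t ht
    have h2 : S j + t < S (j + 1) := by rw [hSsucc]; omega
    have hj := hJeq j (S j + t) (Nat.le_add_right _ _) h2
    simp only [hMdef, hj]
    congr 2
    omega
  have hshadow : ∀ j t, t ≤ ℓ j →
      |orb M (S j + t) - orb (ms j) (a j + t)| ≤ |orb M (S j) - orb (ms j) (a j)| / 2 ^ t :=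
    fun j => shadow hM2 (hMblk j)
  set E : ℕ → ℝ := fun j => |orb M (S j) - orb (ms j) (a j)| with hEdef
  have hE0 : ∀ j, 0 ≤ E j := fun j => abs_nonneg _
  have hEhalf : ∀ j, E j ≤ 1 / 2 := by
    intro j
    obtain ⟨u1, u2⟩ := orb_mem hM2 (S j)
    obtain ⟨v1, v2⟩ := orb_mem (hms j) (a j)
    exact abs_le.2 ⟨by linarith, by linarith⟩
  -- distance of orbit values at a j and b j to x j
  have hnear : ∀ j (n : ℕ), a j ≤ n → orb (ms j) n < x j + εr j → |orb (ms j) n - x j| ≤ εr j := by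
    intro j n hn h2
    have h1 := hlow j n hn
    exact abs_le.2 ⟨by linarith, by linarith⟩
  have hEbound : ∀ j, E (j + 1) ≤ εr j + εr j + εr (j + 1) + |x j - x (j + 1)| := by
    intro j
    have hsh := hshadow j (ℓ j) le_rfl
    rw [hba j, ← hSsucc j] at hsh
    have h1 : |orb M (S (j + 1)) - orb (ms j) (b j)| ≤ εr j := by
      have hEh := hEhalf j
      have hpow : (2:ℝ) ^ (j + 1) ≤ 2 ^ ℓ j := by
        apply pow_le_pow_right₀ (by norm_num) (hℓ j)
      have hp1 : (0:ℝ) < 2 ^ (j + 1) := by positivity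
      have hp2 : (0:ℝ) < 2 ^ ℓ j := by positivity
      have : E j / 2 ^ ℓ j ≤ (1/2) / 2 ^ (j + 1) := by
        apply div_le_div₀ (by norm_num) hEh hp1 hpow
      have heq : (1/2 : ℝ) / 2 ^ (j + 1) ≤ εr j := by
        have h2 : ((1:ℝ)/2) ^ (j + 2) ≤ (1/2 : ℝ) ^ j :=
          pow_le_pow_of_le_one (by norm_num) (by norm_num) (by omega)
        have h3 : ((1:ℝ)/2) / 2 ^ (j + 1) = ((1:ℝ)/2) ^ (j + 2) := by
          rw [div_pow, one_pow, pow_succ, pow_succ, pow_succ]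
          ring
        rw [hεrdef, h3]
        exact h2
      calc |orb M (S (j + 1)) - orb (ms j) (b j)| ≤ E j / 2 ^ ℓ j := hsh
        _ ≤ (1/2) / 2 ^ (j + 1) := this
        _ ≤ εr j := heq
    have h2 : |orb (ms j) (b j) - x j| ≤ εr j :=
      hnear j (b j) (by have := hab j; omega) (hb j)
    have h3 : |orb (ms (j + 1)) (a (j + 1)) - x (j + 1)| ≤ εr (j + 1) :=
      hnear (j + 1) (a (j + 1)) le_rfl (ha (j + 1))
    have habs1 := abs_sub_abs_le_abs_sub (orb M (S (j+1)) - orb (ms (j+1)) (a (j+1))) 0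
    have key : orb M (S (j + 1)) - orb (ms (j + 1)) (a (j + 1)) =
        (orb M (S (j + 1)) - orb (ms j) (b j)) + (orb (ms j) (b j) - x j) +
        (x j - x (j + 1)) + (x (j + 1) - orb (ms (j + 1)) (a (j + 1))) := by ring
    calc E (j + 1) = |orb M (S (j+1)) - orb (ms (j+1)) (a (j+1))| := rfl
      _ = |(orb M (S (j + 1)) - orb (ms j) (b j)) + (orb (ms j) (b j) - x j) +
          (x j - x (j + 1)) + (x (j + 1) - orb (ms (j + 1)) (a (j + 1)))| := by rw [key]
      _ ≤ |(orb M (S (j + 1)) - orb (ms j) (b j)) + (orb (ms j) (b j) - x j) +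
          (x j - x (j + 1))| + |x (j + 1) - orb (ms (j + 1)) (a (j + 1))| := abs_add_le _ _
      _ ≤ |(orb M (S (j + 1)) - orb (ms j) (b j)) + (orb (ms j) (b j) - x j)| +
          |x j - x (j + 1)| + |x (j + 1) - orb (ms (j + 1)) (a (j + 1))| := by
            have := abs_add_le ((orb M (S (j + 1)) - orb (ms j) (b j)) + (orb (ms j) (b j) - x j))
              (x j - x (j + 1))
            linarith
      _ ≤ |orb M (S (j + 1)) - orb (ms j) (b j)| + |orb (ms j) (b j) - x j| +
          |x j - x (j + 1)| + |x (j + 1) - orb (ms (j + 1)) (a (j + 1))| := by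
            have := abs_add_le (orb M (S (j + 1)) - orb (ms j) (b j)) (orb (ms j) (b j) - x j)
            linarith
      _ ≤ εr j + εr j + εr (j + 1) + |x j - x (j + 1)| := by
            rw [abs_sub_comm (x (j+1))]
            linarith
  -- E tends to 0
  have hxdiff : Tendsto (fun j => |x j - x (j + 1)|) atTop (nhds 0) := by
    have h1 : Tendsto (fun j => x (j + 1)) atTop (nhds L) :=
      hlim.comp (tendsto_add_atTop_nat 1)
    have h2 := (hlim.sub h1).abs
    simpa using h2
  have hEtend : Tendsto E atTop (nhds 0) := by
    rw [← tendsto_add_atTop_iff_nat 1]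
    have hc : Tendsto (fun j => εr j + εr j + εr (j + 1) + |x j - x (j + 1)|) atTop (nhds 0) := by
      have hεr1 : Tendsto (fun j => εr (j + 1)) atTop (nhds 0) :=
        hεr0.comp (tendsto_add_atTop_nat 1)
      have := ((hεr0.add hεr0).add hεr1).add hxdiff
      simpa using this
    exact squeeze_zero (fun j => hE0 (j + 1)) hEbound hc
  -- |x j - L| → 0
  have hxL : Tendsto (fun j => |x j - L|) atTop (nhds 0) := by
    have := (hlim.sub (tendsto_const_nhds (x := L))).abs
    simpa using this
  -- lower bound on orbit values in block j
  have hblocklow : ∀ n, x (J n) - εr (J n) - E (J n) ≤ orb M n := by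
    intro n
    have h1 := hJ2 n
    have h2 := hJ1 n
    rw [hSsucc] at h2
    set j := J n
    set t := n - S j with htdef
    have hn : n = S j + t := by omega
    have htl : t ≤ ℓ j := by omega
    have hsh := hshadow j t htl
    have hEt : E j / 2 ^ t ≤ E j := by
      apply div_le_self (hE0 j)
      exact one_le_pow₀ (by norm_num)
    have hl := hlow j (a j + t) (Nat.le_add_right _ _)
    rw [← hn] at hsh
    have := abs_le.1 hsh
    linarith [this.1, this.2]
  -- frequently near L
  have hfreqnear : ∀ j, |orb M (S j) - L| ≤ E j + εr j + |x j - L| := by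
    intro j
    have h2 : |orb (ms j) (a j) - x j| ≤ εr j := hnear j (a j) le_rfl (ha j)
    have key : orb M (S j) - L = (orb M (S j) - orb (ms j) (a j)) +
        (orb (ms j) (a j) - x j) + (x j - L) := by ring
    calc |orb M (S j) - L| = _ := by rw [key]
      _ ≤ |(orb M (S j) - orb (ms j) (a j)) + (orb (ms j) (a j) - x j)| + |x j - L| :=
          abs_add_le _ _
      _ ≤ |orb M (S j) - orb (ms j) (a j)| + |orb (ms j) (a j) - x j| + |x j - L| := by
          have := abs_add_le (orb M (S j) - orb (ms j) (a j)) (orb (ms j) (a j) - x j)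
          linarith
      _ ≤ E j + εr j + |x j - L| := by
          simp only [hEdef]; linarith
  refine ⟨M, hM2, ?_⟩
  have hbge := bdd_ge hM2
  have hble := bdd_le hM2
  apply le_antisymm
  · -- liminf ≤ L
    have hle : ∀ ρ : ℝ, 0 < ρ → Filter.atTop.liminf (fun n => orb M n) ≤ L + ρ := by
      intro ρ hρ
      apply liminf_le_of_frequently_le _ hbge
      rw [frequently_atTop]
      intro N
      have hev : ∀ᶠ j in atTop, E j + εr j + |x j - L| < ρ := by
        have := (hEtend.add hεr0).add hxL
        simp only [add_zero] at this
        exact this.eventually (eventually_lt_nhds hρ)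
      obtain ⟨K, hK⟩ := eventually_atTop.1 hev
      refine ⟨S (max N K), le_trans (le_max_left N K) (le_trans (hSge _) le_rfl), ?_⟩
      have h1 := hfreqnear (max N K)
      have h2 := hK (max N K) (le_max_right N K)
      have := (abs_le.1 h1).2
      linarith
    by_contra hcon
    push_neg at hcon
    have := hle ((Filter.atTop.liminf (fun n => orb M n) - L) / 2) (by linarith)
    linarith
  · -- L ≤ liminf
    have hge : ∀ ρ : ℝ, 0 < ρ → L - ρ ≤ Filter.atTop.liminf (fun n => orb M n) := by
      intro ρ hρ
      apply le_liminf_of_le hble.isCoboundedUnder_ge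
      have hev : ∀ᶠ j in atTop, L - ρ < x j - εr j - E j := by
        have h1 : Tendsto (fun j => x j - εr j - E j) atTop (nhds L) := by
          have := (hlim.sub hεr0).sub hEtend
          simpa using this
        exact h1.eventually (eventually_gt_nhds (by linarith))
      obtain ⟨K, hK⟩ := eventually_atTop.1 hev
      rw [eventually_atTop]
      refine ⟨S K, fun n hn => ?_⟩
      have hJK : K ≤ J n := by
        by_contra hcon
        push_neg at hcon
        have := hSmono (J n + 1) K hcon
        have := hJ1 n
        omega
      have := hK (J n) hJK
      have := hblocklow n
      linarith
    by_contra hcon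
    push_neg at hcon
    have := hge ((L - Filter.atTop.liminf (fun n => orb M n)) / 2) (by linarith)
    linarith
end

section
/- Every x ∈ [0, 1/7] belongs to 𝓛, i.e., for every x ∈ [0, 1/7] there exists a sequence (m_i) of integers ≥ 2 such that liminf_{k→∞} T_{m_k}∘...∘T_{m_1}(0) = x. -/
open Filter Set MeasureTheory

namespace Stmt11Aux

/-- the invariant interval for navigation -/
def I : Set ℝ := Set.Icc (1/7 : ℝ) (3/7)

/-- which of T_2, T_3, T_4 covers the point s -/
noncomputable def piece (s : ℝ) : ℕ := if s ≤ 4/21 then 4 else if s ≤ 2/7 then 3 else 2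

lemma piece_ge (s : ℝ) : 2 ≤ piece s := by unfold piece; split <;> [skip; split] <;> norm_num

lemma piece_le (s : ℝ) : piece s ≤ 4 := by unfold piece; split <;> [skip; split] <;> norm_num

/-- inverse branch -/
noncomputable def ginv (s : ℝ) : ℝ := 1 - piece s * s

lemma orb_succ (m : ℕ → ℕ) (n : ℕ) : orb m (n + 1) = T (m n) (orb m n) := rfl

lemma T_mem {a : ℕ} (h2 : 2 ≤ a) (h4 : a ≤ 4) {s : ℝ} (hs : s ∈ I) : T a s ∈ I := by
  obtain ⟨hs1, hs2⟩ := hs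
  have ha2 : (2:ℝ) ≤ a := by exact_mod_cast h2
  have ha4 : (a:ℝ) ≤ 4 := by exact_mod_cast h4
  have ha0 : (0:ℝ) < a := by linarith
  constructor
  · rw [T, le_div_iff₀ ha0]; nlinarith
  · rw [T, div_le_iff₀ ha0]; nlinarith

lemma ginv_mem {s : ℝ} (hs : s ∈ I) : ginv s ∈ I := by
  obtain ⟨hs1, hs2⟩ := hs
  by_cases h1 : s ≤ 4/21
  · simp only [ginv, piece, if_pos h1]; push_cast
    constructor <;> linarith
  · by_cases h2 : s ≤ 2/7
    · simp only [ginv, piece, if_neg h1, if_pos h2]; push_cast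
      push_neg at h1; constructor <;> linarith
    · simp only [ginv, piece, if_neg h1, if_neg h2]; push_cast
      push_neg at h2; constructor <;> linarith

lemma T_piece_ginv (s : ℝ) : T (piece s) (ginv s) = s := by
  have h : (piece s : ℝ) ≠ 0 := by
    have := piece_ge s; positivity
  rw [T, ginv]
  field_simp
  ring

/-- backward (inverse-map) itinerary of the target t -/
noncomputable def tseq (t : ℝ) : ℕ → ℝ
  | 0 => t
  | k + 1 => ginv (tseq t k)

lemma tseq_mem {t : ℝ} (ht : t ∈ I) : ∀ k, tseq t k ∈ I := by
  intro k; induction k with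
  | zero => exact ht
  | succ k ih => exact ginv_mem ih

/-- partial forward composition along the reversed itinerary of length n -/
noncomputable def W (t : ℝ) (n : ℕ) (y : ℝ) : ℕ → ℝ
  | 0 => y
  | p + 1 => T (piece (tseq t (n - 1 - p))) (W t n y p)

lemma W_mem {t : ℝ} {n : ℕ} {y : ℝ} (hy : y ∈ I) : ∀ p, W t n y p ∈ I := by
  intro p; induction p with
  | zero => exact hy
  | succ p ih => exact T_mem (piece_ge _) (piece_le _) ih

lemma W_shift (t : ℝ) (n : ℕ) (y : ℝ) :
    ∀ p, W t (n+1) y (p+1) = W t n (T (piece (tseq t n)) y) p := by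
  intro p; induction p with
  | zero => simp [W]
  | succ p ih =>
      show T (piece (tseq t (n + 1 - 1 - (p+1)))) (W t (n+1) y (p+1))
        = T (piece (tseq t (n - 1 - p))) (W t n (T (piece (tseq t n)) y) p)
      have hh : n + 1 - 1 - (p + 1) = n - 1 - p := by omega
      rw [ih, hh]

lemma W_fix (t : ℝ) : ∀ n, W t n (tseq t n) n = t := by
  intro n; induction n with
  | zero => rfl
  | succ n ih =>
      rw [W_shift]
      show W t n (T (piece (tseq t n)) (ginv (tseq t n))) n = t
      rw [T_piece_ginv, ih]

lemma W_contract (t : ℝ) (n : ℕ) (y y' : ℝ) :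
    ∀ p, |W t n y p - W t n y' p| ≤ (1/2)^p * |y - y'| := by
  intro p; induction p with
  | zero => simp [W]
  | succ p ih =>
      have hp : (2:ℝ) ≤ (piece (tseq t (n - 1 - p)) : ℝ) := by
        exact_mod_cast piece_ge _
      have hp0 : (0:ℝ) < (piece (tseq t (n - 1 - p)) : ℝ) := by linarith
      show |T _ (W t n y p) - T _ (W t n y' p)| ≤ _
      rw [T, T, div_sub_div_same, abs_div, abs_of_pos hp0]
      have h1 : |1 - W t n y p - (1 - W t n y' p)| = |W t n y p - W t n y' p| := by
        rw [show (1 - W t n y p - (1 - W t n y' p)) = -(W t n y p - W t n y' p) by ring,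
          abs_neg]
      rw [h1]
      calc |W t n y p - W t n y' p| / (piece (tseq t (n - 1 - p)) : ℝ)
          ≤ |W t n y p - W t n y' p| / 2 := by
            apply div_le_div_of_nonneg_left (abs_nonneg _) (by norm_num) hp
        _ ≤ ((1/2)^p * |y - y'|) / 2 := by
            apply div_le_div_of_nonneg_right ih (by norm_num)
        _ = (1/2)^(p+1) * |y - y'| := by ring

lemma W_close {t y : ℝ} (ht : t ∈ I) (hy : y ∈ I) (n : ℕ) :
    |W t n y n - t| ≤ (1/2)^n * (2/7) := by
  have h1 := W_contract t n y (tseq t n) n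
  rw [W_fix] at h1
  have h2 : |y - tseq t n| ≤ 2/7 := by
    have h3 := tseq_mem ht n
    obtain ⟨a1, a2⟩ := hy; obtain ⟨b1, b2⟩ := h3
    rw [abs_le]; constructor <;> linarith
  calc |W t n y n - t| ≤ (1/2)^n * |y - tseq t n| := h1
    _ ≤ (1/2)^n * (2/7) := by
        apply mul_le_mul_of_nonneg_left h2 (by positivity)

/-! ### the dip multiplier and targets, for a fixed x ∈ (0, 1/7] -/

noncomputable def M (x : ℝ) : ℕ := ⌈4 / (7 * x)⌉₊

noncomputable def tt (x : ℝ) (j : ℕ) : ℝ := 1 - M x * x - 1 / (14 * (j + 1))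

section xfixed

variable {x : ℝ} (hx0 : 0 < x) (hx7 : x ≤ 1/7)

include hx0 in
lemma Mx_lb : 4/7 ≤ M x * x := by
  have hx : x ≠ 0 := ne_of_gt hx0
  have h := mul_le_mul_of_nonneg_right (Nat.le_ceil (4 / (7 * x))) hx0.le
  calc (4:ℝ)/7 = 4 / (7 * x) * x := by field_simp
    _ ≤ M x * x := h

include hx0 hx7 in
lemma Mx_ub : M x * x ≤ 5/7 := by
  have hx : x ≠ 0 := ne_of_gt hx0
  have h : (M x : ℝ) < 4 / (7 * x) + 1 := Nat.ceil_lt_add_one (by positivity)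
  have h2 := mul_le_mul_of_nonneg_right h.le hx0.le
  have h3 : (4 / (7 * x) + 1) * x = 4/7 + x := by field_simp
  rw [h3] at h2; linarith

include hx0 hx7 in
lemma M_ge4 : 4 ≤ M x := by
  have h := Nat.le_ceil (4 / (7 * x))
  have h7 : (0:ℝ) < 7 * x := by linarith
  have h4 : (4:ℝ) ≤ 4 / (7 * x) := by
    rw [le_div_iff₀ h7]; nlinarith
  have : (4:ℝ) ≤ (M x : ℝ) := le_trans h4 h
  exact_mod_cast this

include hx0 hx7 in
lemma tt_mem (j : ℕ) : tt x j ∈ I := by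
  have h1 := Mx_lb hx0
  have h2 := Mx_ub hx0 hx7
  have hjn : (0:ℝ) ≤ (j:ℝ) := Nat.cast_nonneg j
  have hj0 : (0:ℝ) < 14 * ((j:ℝ) + 1) := by linarith
  have hj1 : (14:ℝ) ≤ 14 * ((j:ℝ) + 1) := by nlinarith
  have hub : 1 / (14 * ((j:ℝ) + 1)) ≤ 1/14 := by
    apply one_div_le_one_div_of_le (by norm_num) hj1
  have hpos : 0 < 1 / (14 * ((j:ℝ) + 1)) := by positivity
  constructor <;> simp only [tt] <;> push_cast <;> linarith

end xfixed

/-! ### block bookkeeping -/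

def c : ℕ → ℕ
  | 0 => 2
  | j + 1 => c j + (j + 6)

lemma c_succ (j : ℕ) : c (j + 1) = c j + (j + 6) := rfl

lemma c_lb : ∀ j, j + 2 ≤ c j := by
  intro j; induction j with
  | zero => simp [c]
  | succ j ih => rw [c_succ]; omega

lemma c_mono : StrictMono c := strictMono_nat_of_lt_succ (fun j => by rw [c_succ]; omega)

lemma exC (n : ℕ) : ∃ j, n < c (j + 1) := ⟨n, by have := c_lb (n + 1); omega⟩

noncomputable def Jidx (n : ℕ) : ℕ := Nat.find (exC n)

lemma Jidx_eq {j n : ℕ} (h1 : c j ≤ n) (h2 : n < c (j + 1)) : Jidx n = j := by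
  rw [Jidx, Nat.find_eq_iff]
  refine ⟨h2, fun k hk hcon => ?_⟩
  have : c (k + 1) ≤ c j := c_mono.monotone (by omega)
  omega

noncomputable def blockEntry (x : ℝ) (j p : ℕ) : ℕ :=
  if p < j + 3 then piece (tseq (tt x j) (j + 2 - p)) else if p = j + 3 then M x else 2

noncomputable def mseq (x : ℝ) (n : ℕ) : ℕ :=
  if n < 2 then 2 else blockEntry x (Jidx n) (n - c (Jidx n))

lemma mseq_at (x : ℝ) (j p : ℕ) (hp : p < j + 6) :
    mseq x (c j + p) = blockEntry x j p := by
  have h2 : 2 ≤ c j := by have := c_lb j; omega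
  have hJ : Jidx (c j + p) = j := Jidx_eq (by omega) (by rw [c_succ]; omega)
  rw [mseq, if_neg (by omega), hJ]
  congr 1
  omega


/-! ### the orbit along `mseq` -/

noncomputable def Y (x : ℝ) (j : ℕ) : ℝ := orb (mseq x) (c j)

noncomputable def navEnd (x : ℝ) (j : ℕ) : ℝ := W (tt x j) (j + 3) (Y x j) (j + 3)

noncomputable def dipVal (x : ℝ) (j : ℕ) : ℝ := T (M x) (navEnd x j)

lemma orb_nav (x : ℝ) (j : ℕ) :
    ∀ p, p ≤ j + 3 → orb (mseq x) (c j + p) = W (tt x j) (j + 3) (Y x j) p := by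
  intro p
  induction p with
  | zero => intro _; rfl
  | succ p ih =>
      intro hp
      have h1 : c j + (p + 1) = (c j + p) + 1 := rfl
      rw [h1, orb_succ, mseq_at x j p (by omega), ih (by omega)]
      rw [blockEntry, if_pos (show p < j + 3 by omega)]
      have h2 : j + 3 - 1 - p = j + 2 - p := by omega
      rw [show W (tt x j) (j+3) (Y x j) (p+1)
          = T (piece (tseq (tt x j) (j + 3 - 1 - p))) (W (tt x j) (j+3) (Y x j) p) from rfl, h2]

lemma orb_dip (x : ℝ) (j : ℕ) : orb (mseq x) (c j + (j + 4)) = dipVal x j := by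
  have h1 : c j + (j + 4) = (c j + (j + 3)) + 1 := by omega
  rw [h1, orb_succ, mseq_at x j (j+3) (by omega), orb_nav x j (j+3) le_rfl]
  rw [blockEntry, if_neg (by omega), if_pos rfl]
  rfl

lemma orb_post (x : ℝ) (j : ℕ) : orb (mseq x) (c j + (j + 5)) = T 2 (dipVal x j) := by
  have h1 : c j + (j + 5) = (c j + (j + 4)) + 1 := by omega
  rw [h1, orb_succ, mseq_at x j (j+4) (by omega), orb_dip x j]
  rw [blockEntry, if_neg (by omega), if_neg (by omega)]

lemma Y_succ (x : ℝ) (j : ℕ) : Y x (j + 1) = T 2 (T 2 (dipVal x j)) := by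
  have h1 : c (j + 1) = (c j + (j + 5)) + 1 := by rw [c_succ]; omega
  rw [Y, h1, orb_succ, mseq_at x j (j+5) (by omega), orb_post x j]
  rw [blockEntry, if_neg (by omega), if_neg (by omega)]

section main

variable {x : ℝ} (hx0 : 0 < x) (hx7 : x ≤ 1/7)

include hx0 hx7 in
lemma navEnd_close (j : ℕ) (hY : Y x j ∈ I) :
    |navEnd x j - tt x j| ≤ 1 / (28 * ((j:ℝ) + 1)) := by
  have h := W_close (tt_mem hx0 hx7 j) hY (j + 3)
  refine h.trans ?_
  have h2 : ((j:ℝ) + 1) ≤ 2^j := by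
    have := Nat.lt_two_pow_self (n := j)
    exact_mod_cast this
  have hp : (0:ℝ) < 2^j := by positivity
  have e1 : (1/2:ℝ)^(j+3) * (2/7) = 1/(28 * 2^j) := by
    rw [pow_add, div_pow, one_pow]
    field_simp
    ring
  rw [e1]
  apply one_div_le_one_div_of_le (by positivity)
  nlinarith

include hx0 hx7 in
lemma dip_bounds (j : ℕ) (hY : Y x j ∈ I) :
    x ≤ dipVal x j ∧ dipVal x j ≤ x + 3/4 * (1 / (28 * ((j:ℝ) + 1))) := by
  have hnav := navEnd_close hx0 hx7 j hY
  have hM : (4:ℝ) ≤ (M x : ℝ) := by exact_mod_cast M_ge4 hx0 hx7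
  have hM0 : (0:ℝ) < (M x : ℝ) := by linarith
  rw [abs_le] at hnav
  obtain ⟨hn1, hn2⟩ := hnav
  set e : ℝ := 1 / (28 * ((j:ℝ) + 1)) with he
  have he0 : 0 < e := by rw [he]; positivity
  have hj0 : ((j:ℝ) + 1) ≠ 0 := by positivity
  have htt : tt x j = 1 - M x * x - 2 * e := by
    rw [tt, he]; field_simp; ring
  have hmc : (M x : ℝ) * x = x * (M x : ℝ) := mul_comm _ _
  constructor
  · rw [dipVal, T, le_div_iff₀ hM0]
    rw [htt] at hn2
    linarith
  · rw [dipVal, T, div_le_iff₀ hM0]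
    rw [htt] at hn1
    have h3 : 3 * e ≤ 3/4 * e * (M x : ℝ) := by nlinarith
    nlinarith

include hx0 hx7 in
lemma Ynext_mem (j : ℕ) (hY : Y x j ∈ I) : Y x (j + 1) ∈ I := by
  obtain ⟨hd1, hd2⟩ := dip_bounds hx0 hx7 j hY
  have hj1 : (1:ℝ) ≤ (j:ℝ) + 1 := by
    have : (0:ℝ) ≤ (j:ℝ) := Nat.cast_nonneg j
    linarith
  have hee : 3/4 * (1 / (28 * ((j:ℝ) + 1))) ≤ 3/112 := by
    have : 1 / (28 * ((j:ℝ) + 1)) ≤ 1/28 := by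
      apply one_div_le_one_div_of_le (by norm_num)
      linarith
    linarith
  have hdub : dipVal x j ≤ 19/112 := by linarith
  have hd0 : (0:ℝ) ≤ dipVal x j := le_trans hx0.le hd1
  rw [Y_succ]
  have h2 : ((2:ℕ):ℝ) = 2 := by norm_num
  constructor <;> simp only [T, h2] <;> linarith

lemma Y_zero (x : ℝ) : Y x 0 = 1/4 := by
  have h0 : mseq x 0 = 2 := by simp [mseq]
  have h1 : mseq x 1 = 2 := by simp [mseq]
  show orb (mseq x) 2 = 1/4
  rw [show orb (mseq x) 2 = T (mseq x 1) (T (mseq x 0) 0) from rfl, h0, h1]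
  norm_num [T]

include hx0 hx7 in
lemma YI : ∀ j, Y x j ∈ I := by
  intro j
  induction j with
  | zero => rw [Y_zero]; constructor <;> norm_num
  | succ j ih => exact Ynext_mem hx0 hx7 j ih

include hx0 hx7 in
lemma mseq_ge2 : ∀ n, 2 ≤ mseq x n := by
  intro n; rw [mseq]
  split
  · norm_num
  · rw [blockEntry]
    split
    · exact piece_ge _
    · split
      · have := M_ge4 hx0 hx7; omega
      · norm_num

lemma c_Jidx_le {n : ℕ} (hn : 2 ≤ n) : c (Jidx n) ≤ n := by
  rcases Nat.eq_zero_or_pos (Jidx n) with h0 | h0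
  · rw [h0]; exact hn
  · have hmin : ¬ n < c ((Jidx n - 1) + 1) :=
      Nat.find_min (exC n) (m := Jidx n - 1) (show Jidx n - 1 < Jidx n by omega)
    have hk : Jidx n = (Jidx n - 1) + 1 := by omega
    rw [hk]
    omega

include hx0 hx7 in
lemma orb_ge (n : ℕ) (hn : 1 ≤ n) : x ≤ orb (mseq x) n := by
  rcases eq_or_lt_of_le hn with h1 | h2
  · have hor : orb (mseq x) 1 = 1/2 := by
      have h0 : mseq x 0 = 2 := by simp [mseq]
      rw [show orb (mseq x) 1 = T (mseq x 0) 0 from rfl, h0]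
      norm_num [T]
    rw [← h1, hor]; linarith
  · have hn2 : 2 ≤ n := h2
    set j := Jidx n with hj
    have hcj : c j ≤ n := c_Jidx_le hn2
    have hlt : n < c (j + 1) := Nat.find_spec (exC n)
    have hplt : n - c j < j + 6 := by rw [c_succ] at hlt; omega
    have hneq : n = c j + (n - c j) := by omega
    set p := n - c j with hp
    have hYj := YI hx0 hx7 j
    rcases lt_or_ge p (j + 4) with hc | hc
    · have hw := W_mem (t := tt x j) (n := j + 3) hYj p
      rw [hneq, orb_nav x j p (by omega)]
      have := hw.1
      linarith
    · obtain ⟨hd1, hd2⟩ := dip_bounds hx0 hx7 j hYj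
      rcases eq_or_lt_of_le hc with hc1 | hc2
      · rw [hneq, ← hc1, orb_dip x j]
        exact hd1
      · have hc3 : p = j + 5 := by omega
        rw [hneq, hc3, orb_post x j]
        have hj1 : (1:ℝ) ≤ (j:ℝ) + 1 := by
          have : (0:ℝ) ≤ (j:ℝ) := Nat.cast_nonneg j
          linarith
        have hee : 3/4 * (1 / (28 * ((j:ℝ) + 1))) ≤ 3/112 := by
          have : 1 / (28 * ((j:ℝ) + 1)) ≤ 1/28 := by
            apply one_div_le_one_div_of_le (by norm_num)
            linarith
          linarith
        have hdub : dipVal x j ≤ 19/112 := by linarith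
        have h2 : ((2:ℕ):ℝ) = 2 := by norm_num
        rw [T, h2, le_div_iff₀ (by norm_num : (0:ℝ) < 2)]
        linarith

lemma orb_mem01 (m : ℕ → ℕ) (hm : ∀ i, 2 ≤ m i) : ∀ n, orb m n ∈ Set.Icc (0:ℝ) 1 := by
  intro n; induction n with
  | zero => constructor <;> norm_num [orb]
  | succ n ih =>
      obtain ⟨h0, h1⟩ := ih
      have h2 : (2:ℝ) ≤ (m n : ℝ) := by exact_mod_cast hm n
      rw [orb_succ, T]
      constructor
      · apply div_nonneg (by linarith) (by linarith)
      · rw [div_le_one (by linarith)]; linarith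

include hx0 hx7 in
lemma liminf_orb : atTop.liminf (fun n => orb (mseq x) n) = x := by
  have hm2 := mseq_ge2 hx0 hx7
  have hbound := orb_mem01 (mseq x) hm2
  have hbddA : IsBoundedUnder (· ≤ ·) atTop (fun n => orb (mseq x) n) :=
    Filter.isBoundedUnder_of ⟨1, fun n => (hbound n).2⟩
  have hbddB : IsBoundedUnder (· ≥ ·) atTop (fun n => orb (mseq x) n) :=
    Filter.isBoundedUnder_of ⟨0, fun n => (hbound n).1⟩
  apply le_antisymm
  · apply le_of_forall_pos_le_add
    intro ε hε
    apply liminf_le_of_frequently_le _ hbddB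
    rw [frequently_atTop]
    intro N
    set j := max N ⌈1/ε⌉₊ with hjdef
    refine ⟨c j + (j + 4), ?_, ?_⟩
    · have hc := c_lb j
      have hN : N ≤ j := le_max_left _ _
      omega
    · rw [orb_dip]
      have hY := YI hx0 hx7 j
      obtain ⟨_, hub⟩ := dip_bounds hx0 hx7 j hY
      have hj1 : (1:ℝ) ≤ (j:ℝ) + 1 := by
        have : (0:ℝ) ≤ (j:ℝ) := Nat.cast_nonneg j
        linarith
      have hje : 1/((j:ℝ)+1) ≤ ε := by
        have h1 : (1:ℝ)/ε ≤ (⌈1/ε⌉₊ : ℝ) := Nat.le_ceil _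
        have h2 : ((⌈1/ε⌉₊ : ℕ):ℝ) ≤ (j:ℝ) := by
          exact_mod_cast (le_max_right N ⌈1/ε⌉₊)
        rw [div_le_iff₀ (by linarith : (0:ℝ) < (j:ℝ)+1)]
        rw [div_le_iff₀ hε] at h1
        nlinarith
      have hsm : 3/4 * (1 / (28 * ((j:ℝ) + 1))) ≤ 1/((j:ℝ)+1) := by
        have hp : (0:ℝ) < (j:ℝ) + 1 := by linarith
        have h28 : 1 / (28 * ((j:ℝ)+1)) ≤ 1/((j:ℝ)+1) :=
          one_div_le_one_div_of_le hp (by linarith)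
        have ha0 : (0:ℝ) ≤ 1 / (28 * ((j:ℝ)+1)) := by positivity
        linarith
      linarith
  · apply le_liminf_of_le hbddA.isCoboundedUnder_ge
    rw [eventually_atTop]
    exact ⟨1, fun n hn => orb_ge hx0 hx7 n hn⟩

end main

end Stmt11Aux

theorem stmt11 : Set.Icc (0 : ℝ) (1/7) ⊆ Lset := by
  rintro x ⟨hx0, hx7⟩
  rcases eq_or_lt_of_le hx0 with h0 | hpos
  · refine ⟨fun n => n + 2, fun i => by show 2 ≤ i + 2; omega, ?_⟩
    rw [← h0]
    apply Filter.Tendsto.liminf_eq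
    have hb := Stmt11Aux.orb_mem01 (fun n => n + 2) (fun i => by show 2 ≤ i + 2; omega)
    apply squeeze_zero (fun n => (hb n).1) (g := fun n : ℕ => 1/(n:ℝ)) ?_
      tendsto_one_div_atTop_nhds_zero_nat
    intro n
    cases n with
    | zero => norm_num [orb]
    | succ n =>
        have h1 := (hb n).1
        rw [Stmt11Aux.orb_succ, T]
        show (1 - orb (fun n => n + 2) n) / (((n + 2 : ℕ)):ℝ) ≤ 1 / (((n + 1 : ℕ)):ℝ)
        push_cast
        rw [div_le_div_iff₀ (by positivity) (by positivity)]
        nlinarith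
  · exact ⟨Stmt11Aux.mseq x, Stmt11Aux.mseq_ge2 hpos hx7, Stmt11Aux.liminf_orb hpos hx7⟩
end

section
/- The Lebesgue measure of 𝓛 ∩ [3/17, 1/3] is zero. -/
open Filter Set MeasureTheory

namespace Stmt13Aux

/-!  The key construction: a nested sequence of compact covers.

If `L ∈ 𝓛` with `L > 3/17`, then the orbit eventually lives in the band
`[3/17, 7/17]`, only maps `T_2, T_3, T_4` can be used (a larger `m` would throw
the orbit below `3/17`), and the orbit visits any neighbourhood of `L`
infinitely often.  Hence `L` lies in `Cs n` for every `n`, where `Cs n` is the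
set of points reachable in `n` admissible steps from the band.

A two-cell weighted measure argument (`cell0 = [3/17, 5/17]`,
`cell1 = [5/17, 7/17]`, weights `600/444`) shows that the Lebesgue measure of
`Cs n` decays geometrically (ratio `24/25`), because after a `T_2`-step the
map `T_4` is never admissible (this is exactly where `3/17` is critical).  -/

noncomputable def step (S : Set ℝ) : Set ℝ :=
  (((fun x : ℝ => (1 - x)/2) '' S) ∪ ((fun x : ℝ => (1 - x)/3) '' S) ∪
    ((fun x : ℝ => (1 - x)/4) '' S)) ∩ Set.Ici (3/17 : ℝ)

noncomputable def Cs : ℕ → Set ℝ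
  | 0 => Set.Icc (3/17 : ℝ) (7/17)
  | n + 1 => step (Cs n)

lemma Cs_compact : ∀ n, IsCompact (Cs n) := by
  intro n
  induction n with
  | zero => exact isCompact_Icc
  | succ n ih =>
    have hc : ∀ c : ℝ, Continuous (fun x : ℝ => (1 - x)/c) := by
      intro c; fun_prop
    exact (((ih.image (hc 2)).union (ih.image (hc 3))).union (ih.image (hc 4))).inter_right
      isClosed_Ici

lemma Cs_subset_band : ∀ n, Cs n ⊆ Set.Icc (3/17 : ℝ) (7/17) := by
  intro n
  induction n with
  | zero => exact le_refl _
  | succ n ih =>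
    rintro x ⟨hx, hxl⟩
    refine ⟨hxl, ?_⟩
    have key : ∀ c : ℝ, 2 ≤ c → ∀ y ∈ Cs n, (1 - y)/c ≤ 7/17 := by
      intro c hc y hy
      have h1 : (3:ℝ)/17 ≤ y := (ih hy).1
      have h2 : y ≤ 7/17 := (ih hy).2
      have hny : (0:ℝ) ≤ 1 - y := by linarith
      calc (1 - y)/c ≤ (1 - y)/2 := by
            apply div_le_div_of_nonneg_left hny (by norm_num) hc
        _ ≤ 7/17 := by linarith
    rcases hx with (⟨y, hy, rfl⟩ | ⟨y, hy, rfl⟩) | ⟨y, hy, rfl⟩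
    · exact key 2 (by norm_num) y hy
    · exact key 3 (by norm_num) y hy
    · exact key 4 (by norm_num) y hy

lemma vol_image (c : ℝ) (hc : 0 < c) (A : Set ℝ) :
    volume ((fun x : ℝ => (1 - x)/c) '' A) = ENNReal.ofReal (1/c) * volume A := by
  have heq : (fun x : ℝ => (1 - x)/c)
      = fun x : ℝ => AffineMap.homothety (1/(c+1) : ℝ) (-(1/c)) x := by
    funext x
    simp [AffineMap.homothety_apply]
    field_simp
    ring
  rw [heq]
  have := MeasureTheory.Measure.addHaar_image_homothety (μ := (volume : Measure ℝ))
    (1/(c+1) : ℝ) (-(1/c)) A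
  rw [show (AffineMap.homothety (1/(c+1) : ℝ) (-(1/c)) '' A)
      = (fun x : ℝ => AffineMap.homothety (1/(c+1) : ℝ) (-(1/c)) x) '' A from rfl] at this
  rw [this]
  congr 1
  rw [Module.finrank_self, pow_one, abs_neg, abs_of_pos (by positivity)]

noncomputable def cell0 : Set ℝ := Set.Icc (3/17) (5/17)
noncomputable def cell1 : Set ℝ := Set.Icc (5/17) (7/17)

lemma incl_a (n : ℕ) : Cs (n+1) ∩ cell0 ⊆
    ((fun x : ℝ => (1 - x)/3) '' (Cs n ∩ cell0)) ∪ ((fun x : ℝ => (1 - x)/3) '' (Cs n ∩ cell1)) ∪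
    ((fun x : ℝ => (1 - x)/4) '' (Cs n ∩ cell0)) ∪ {(5/17 : ℝ)} := by
  rintro x ⟨⟨hx, hxl⟩, hx0⟩
  rcases hx with (⟨y, hy, rfl⟩ | ⟨y, hy, rfl⟩) | ⟨y, hy, rfl⟩
  · -- T2 image meets cell0 only in the single point 5/17
    right
    have h2 := (Cs_subset_band n hy).2
    have hx0' := hx0.2
    have : (1 - y)/2 = 5/17 := by
      simp only [cell0, Set.mem_Icc] at hx0'
      have : (5:ℝ)/17 ≤ (1 - y)/2 := by linarith
      linarith [hx0.2]
    simp [this]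
  · -- T3 image
    left
    have hb := Cs_subset_band n hy
    rcases le_or_gt y (5/17) with h | h
    · exact Or.inl (Or.inl ⟨y, ⟨hy, hb.1, h⟩, rfl⟩)
    · exact Or.inl (Or.inr ⟨y, ⟨hy, le_of_lt h, hb.2⟩, rfl⟩)
  · -- T4 image: the source must lie in cell0
    left; right
    have hb := Cs_subset_band n hy
    have hyle : y ≤ 5/17 := by
      have : (3:ℝ)/17 ≤ (1 - y)/4 := hxl
      linarith
    exact ⟨y, ⟨hy, hb.1, hyle⟩, rfl⟩

lemma incl_b (n : ℕ) : Cs (n+1) ∩ cell1 ⊆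
    ((fun x : ℝ => (1 - x)/2) '' (Cs n ∩ cell0)) ∪ ((fun x : ℝ => (1 - x)/2) '' (Cs n ∩ cell1)) := by
  rintro x ⟨⟨hx, _⟩, hx1⟩
  have hx1' : (5:ℝ)/17 ≤ x := hx1.1
  rcases hx with (⟨y, hy, rfl⟩ | ⟨y, hy, rfl⟩) | ⟨y, hy, rfl⟩
  · have hb := Cs_subset_band n hy
    rcases le_or_gt y (5/17) with h | h
    · exact Or.inl ⟨y, ⟨hy, hb.1, h⟩, rfl⟩
    · exact Or.inr ⟨y, ⟨hy, le_of_lt h, hb.2⟩, rfl⟩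
  · exfalso
    have hb := Cs_subset_band n hy
    have : (1 - y)/3 ≤ 14/51 := by linarith [hb.1]
    linarith
  · exfalso
    have hb := Cs_subset_band n hy
    have : (1 - y)/4 ≤ 14/68 := by linarith [hb.1]
    linarith

lemma band_fin : volume (Set.Icc (3/17 : ℝ) (7/17)) ≠ ⊤ := by
  simp [Real.volume_Icc]

lemma vol_Cs_fin (n : ℕ) : volume (Cs n) ≠ ⊤ :=
  fun h => band_fin (top_le_iff.1 (h ▸ measure_mono (Cs_subset_band n)))

lemma vol_inter_fin (n : ℕ) (s : Set ℝ) : volume (Cs n ∩ s) ≠ ⊤ :=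
  fun h => vol_Cs_fin n (top_le_iff.1 (h ▸ measure_mono Set.inter_subset_left))

noncomputable def av (n : ℕ) : ℝ := (volume (Cs n ∩ cell0)).toReal
noncomputable def bv (n : ℕ) : ℝ := (volume (Cs n ∩ cell1)).toReal

lemma av_nonneg (n : ℕ) : 0 ≤ av n := ENNReal.toReal_nonneg
lemma bv_nonneg (n : ℕ) : 0 ≤ bv n := ENNReal.toReal_nonneg

lemma av_rec (n : ℕ) : av (n+1) ≤ (1/3) * av n + (1/3) * bv n + (1/4) * av n := by
  have h1 : volume (Cs (n+1) ∩ cell0) ≤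
      ENNReal.ofReal (1/3) * volume (Cs n ∩ cell0) + ENNReal.ofReal (1/3) * volume (Cs n ∩ cell1)
        + ENNReal.ofReal (1/4) * volume (Cs n ∩ cell0) := by
    calc volume (Cs (n+1) ∩ cell0)
        ≤ volume ((((fun x : ℝ => (1 - x)/3) '' (Cs n ∩ cell0)) ∪
            ((fun x : ℝ => (1 - x)/3) '' (Cs n ∩ cell1)) ∪
            ((fun x : ℝ => (1 - x)/4) '' (Cs n ∩ cell0))) ∪ {(5/17 : ℝ)}) :=
          measure_mono (incl_a n)
      _ ≤ volume ((((fun x : ℝ => (1 - x)/3) '' (Cs n ∩ cell0)) ∪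
            ((fun x : ℝ => (1 - x)/3) '' (Cs n ∩ cell1))) ∪
            ((fun x : ℝ => (1 - x)/4) '' (Cs n ∩ cell0))) + volume {(5/17 : ℝ)} :=
          measure_union_le _ _
      _ = volume ((((fun x : ℝ => (1 - x)/3) '' (Cs n ∩ cell0)) ∪
            ((fun x : ℝ => (1 - x)/3) '' (Cs n ∩ cell1))) ∪
            ((fun x : ℝ => (1 - x)/4) '' (Cs n ∩ cell0))) := by
          rw [Real.volume_singleton, add_zero]
      _ ≤ (volume (((fun x : ℝ => (1 - x)/3) '' (Cs n ∩ cell0)))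
            + volume (((fun x : ℝ => (1 - x)/3) '' (Cs n ∩ cell1))))
            + volume (((fun x : ℝ => (1 - x)/4) '' (Cs n ∩ cell0))) :=
          le_trans (measure_union_le _ _) (by gcongr; exact measure_union_le _ _)
      _ = ENNReal.ofReal (1/3) * volume (Cs n ∩ cell0) + ENNReal.ofReal (1/3) * volume (Cs n ∩ cell1)
            + ENNReal.ofReal (1/4) * volume (Cs n ∩ cell0) := by
          rw [vol_image 3 (by norm_num), vol_image 3 (by norm_num), vol_image 4 (by norm_num)]
  have h2 := ENNReal.toReal_mono (by
      refine ENNReal.add_ne_top.2 ⟨ENNReal.add_ne_top.2 ⟨?_, ?_⟩, ?_⟩ <;>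
        exact ENNReal.mul_ne_top (by simp) (vol_inter_fin n _)) h1
  rw [ENNReal.toReal_add, ENNReal.toReal_add, ENNReal.toReal_mul, ENNReal.toReal_mul,
    ENNReal.toReal_mul, ENNReal.toReal_ofReal (by norm_num),
    ENNReal.toReal_ofReal (by norm_num)] at h2
  · exact h2
  · exact ENNReal.mul_ne_top (by simp) (vol_inter_fin n _)
  · exact ENNReal.mul_ne_top (by simp) (vol_inter_fin n _)
  · exact ENNReal.add_ne_top.2 ⟨ENNReal.mul_ne_top (by simp) (vol_inter_fin n _),
      ENNReal.mul_ne_top (by simp) (vol_inter_fin n _)⟩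
  · exact ENNReal.mul_ne_top (by simp) (vol_inter_fin n _)

lemma bv_rec (n : ℕ) : bv (n+1) ≤ (1/2) * av n + (1/2) * bv n := by
  have h1 : volume (Cs (n+1) ∩ cell1) ≤
      ENNReal.ofReal (1/2) * volume (Cs n ∩ cell0)
        + ENNReal.ofReal (1/2) * volume (Cs n ∩ cell1) := by
    calc volume (Cs (n+1) ∩ cell1)
        ≤ volume (((fun x : ℝ => (1 - x)/2) '' (Cs n ∩ cell0)) ∪
            ((fun x : ℝ => (1 - x)/2) '' (Cs n ∩ cell1))) := measure_mono (incl_b n)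
      _ ≤ volume (((fun x : ℝ => (1 - x)/2) '' (Cs n ∩ cell0)))
            + volume (((fun x : ℝ => (1 - x)/2) '' (Cs n ∩ cell1))) := measure_union_le _ _
      _ = _ := by rw [vol_image 2 (by norm_num), vol_image 2 (by norm_num)]
  have h2 := ENNReal.toReal_mono (by
      refine ENNReal.add_ne_top.2 ⟨?_, ?_⟩ <;>
        exact ENNReal.mul_ne_top (by simp) (vol_inter_fin n _)) h1
  rw [ENNReal.toReal_add, ENNReal.toReal_mul, ENNReal.toReal_mul,
    ENNReal.toReal_ofReal (by norm_num)] at h2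
  · exact h2
  · exact ENNReal.mul_ne_top (by simp) (vol_inter_fin n _)
  · exact ENNReal.mul_ne_top (by simp) (vol_inter_fin n _)

noncomputable def Phi (n : ℕ) : ℝ := 600 * av n + 444 * bv n

lemma Phi_rec (n : ℕ) : Phi (n+1) ≤ (24/25) * Phi n := by
  have h1 := av_rec n; have h2 := bv_rec n
  have := av_nonneg n; have := bv_nonneg n
  unfold Phi; linarith

lemma Phi_pow (n : ℕ) : Phi n ≤ (24/25)^n * Phi 0 := by
  induction n with
  | zero => simp
  | succ n ih =>
    calc Phi (n+1) ≤ (24/25) * Phi n := Phi_rec n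
      _ ≤ (24/25) * ((24/25)^n * Phi 0) := by
          have : (0:ℝ) ≤ 24/25 := by norm_num
          nlinarith
      _ = (24/25)^(n+1) * Phi 0 := by ring

lemma vol_Cs_le (n : ℕ) : (volume (Cs n)).toReal ≤ Phi n := by
  have hsub : Cs n ⊆ (Cs n ∩ cell0) ∪ (Cs n ∩ cell1) := by
    intro x hx
    have hb := Cs_subset_band n hx
    rcases le_or_gt x (5/17) with h | h
    · exact Or.inl ⟨hx, hb.1, h⟩
    · exact Or.inr ⟨hx, le_of_lt h, hb.2⟩
  have h1 : volume (Cs n) ≤ volume (Cs n ∩ cell0) + volume (Cs n ∩ cell1) :=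
    le_trans (measure_mono hsub) (measure_union_le _ _)
  have h2 := ENNReal.toReal_mono
    (ENNReal.add_ne_top.2 ⟨vol_inter_fin n _, vol_inter_fin n _⟩) h1
  rw [ENNReal.toReal_add (vol_inter_fin n _) (vol_inter_fin n _)] at h2
  have := av_nonneg n; have := bv_nonneg n
  unfold Phi; unfold av bv at *; linarith

theorem stmt13_measure : volume (⋂ n, Cs n) = 0 := by
  have hfin : volume (⋂ n, Cs n) ≠ ⊤ :=
    fun h => vol_Cs_fin 0 (top_le_iff.1 (h ▸ measure_mono (Set.iInter_subset _ 0)))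
  have hb : ∀ n, (volume (⋂ k, Cs k)).toReal ≤ (24/25)^n * Phi 0 := by
    intro n
    have h1 : volume (⋂ k, Cs k) ≤ volume (Cs n) := measure_mono (Set.iInter_subset _ n)
    exact le_trans (le_trans (ENNReal.toReal_mono (vol_Cs_fin n) h1) (vol_Cs_le n)) (Phi_pow n)
  have htend : Filter.Tendsto (fun n => (24/25 : ℝ)^n * Phi 0) Filter.atTop (nhds 0) := by
    have := (tendsto_pow_atTop_nhds_zero_of_lt_one (by norm_num : (0:ℝ) ≤ 24/25)
      (by norm_num : (24/25 : ℝ) < 1)).mul_const (Phi 0)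
    simpa using this
  have h0 : (volume (⋂ n, Cs n)).toReal ≤ 0 := ge_of_tendsto' htend hb
  have h0' : (volume (⋂ n, Cs n)).toReal = 0 := le_antisymm h0 ENNReal.toReal_nonneg
  rcases (ENNReal.toReal_eq_zero_iff _).1 h0' with h | h
  · exact h
  · exact absurd h hfin

lemma orb_succ (m : ℕ → ℕ) (n : ℕ) : orb m (n+1) = (1 - orb m n) / (m n : ℝ) := rfl

lemma orb_bounds (m : ℕ → ℕ) (hm : ∀ i, 2 ≤ m i) : ∀ n, 0 ≤ orb m n ∧ orb m n ≤ 1/2 := by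
  intro n
  induction n with
  | zero => norm_num [orb]
  | succ n ih =>
    obtain ⟨h0, h1⟩ := ih
    have hM : (2:ℝ) ≤ (m n : ℝ) := by exact_mod_cast hm n
    have hMpos : (0:ℝ) < (m n : ℝ) := by linarith
    rw [orb_succ]
    constructor
    · apply div_nonneg (by linarith) (le_of_lt hMpos)
    · calc (1 - orb m n) / (m n : ℝ) ≤ (1 - orb m n) / 2 :=
            div_le_div_of_nonneg_left (by linarith) (by norm_num) hM
        _ ≤ 1/2 := by linarith

theorem mem_Cs_of_mem_Lset {L : ℝ} (hL1 : 3/17 < L) (hL : L ∈ Lset) : ∀ n, L ∈ Cs n := by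
  obtain ⟨m, hm, hlim⟩ := hL
  intro n
  rw [← (Cs_compact n).isClosed.closure_eq]
  rw [Metric.mem_closure_iff]
  intro δ hδ
  set l'' := max ((3/17 + L)/2) (L - δ) with hl''
  have hl''lo : 3/17 < l'' := lt_max_of_lt_left (by linarith)
  have hl''hi : l'' < L := max_lt (by linarith) (by linarith)
  have hbdd : Filter.atTop.IsBoundedUnder (· ≥ ·) (fun n => orb m n) :=
    Filter.isBoundedUnder_of ⟨0, fun i => (orb_bounds m hm i).1⟩
  have hcob : Filter.atTop.IsCoboundedUnder (· ≥ ·) (fun n => orb m n) :=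
    Filter.IsBoundedUnder.isCoboundedUnder_ge
      (Filter.isBoundedUnder_of ⟨1/2, fun i => (orb_bounds m hm i).2⟩)
  have hev : ∀ᶠ k in Filter.atTop, l'' < orb m k :=
    Filter.eventually_lt_of_lt_liminf (by rw [hlim]; exact hl''hi) hbdd
  obtain ⟨K₀, hK₀⟩ := Filter.eventually_atTop.1 hev
  have hfr : ∃ᶠ k in Filter.atTop, orb m k < L + δ :=
    Filter.frequently_lt_of_liminf_lt hcob (by rw [hlim]; linarith)
  obtain ⟨k, hk1, hk2⟩ := (hfr.and_eventually (Filter.eventually_ge_atTop (K₀ + n + 1))).exists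
  set s := k - n with hs
  have hsk : s + n = k := Nat.sub_add_cancel (by omega)
  have hsK : K₀ + 1 ≤ s := by omega
  have hlo : ∀ j, K₀ ≤ j → l'' < orb m j := fun j hj => hK₀ j hj
  have hlo' : ∀ j, K₀ ≤ j → 3/17 < orb m j := fun j hj => lt_trans hl''lo (hlo j hj)
  have hhi : ∀ j, K₀ + 1 ≤ j → orb m j ≤ 7/17 := by
    intro j hj
    obtain ⟨i, rfl⟩ : ∃ i, j = i + 1 := ⟨j - 1, by omega⟩
    have h1 : 3/17 < orb m i := hlo' i (by omega)
    have h2 : orb m i ≤ 1/2 := (orb_bounds m hm i).2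
    have hM : (2:ℝ) ≤ (m i : ℝ) := by exact_mod_cast hm i
    rw [orb_succ]
    calc (1 - orb m i) / (m i : ℝ) ≤ (1 - orb m i) / 2 :=
          div_le_div_of_nonneg_left (by linarith) (by norm_num) hM
      _ ≤ 7/17 := by linarith
  have key : ∀ j, j ≤ n → orb m (s + j) ∈ Cs j := by
    intro j
    induction j with
    | zero =>
      intro _
      exact ⟨le_of_lt (hlo' s (by omega)), hhi s (by omega)⟩
    | succ j ih =>
      intro hjn
      have hmem := ih (by omega)
      have hband := Cs_subset_band j hmem
      have hx1 : 3/17 ≤ orb m (s + j) := hband.1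
      have hx2 : orb m (s + j) ≤ 7/17 := hband.2
      have hnext_lo : 3/17 < orb m (s + j + 1) := hlo' _ (by omega)
      have hM2 : 2 ≤ m (s + j) := hm _
      have hM4 : m (s + j) ≤ 4 := by
        by_contra h
        have h5 : (5:ℝ) ≤ (m (s+j) : ℝ) := by exact_mod_cast (by omega : 5 ≤ m (s+j))
        have hle : orb m (s + j + 1) ≤ (1 - orb m (s+j)) / 5 := by
          rw [orb_succ]
          apply div_le_div_of_nonneg_left (by linarith) (by norm_num) h5
        have : orb m (s + j + 1) ≤ 14/85 := by
          have : (1 - orb m (s+j)) / 5 ≤ 14/85 := by linarith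
          linarith
        linarith
      have hnext : orb m (s + (j+1)) = (1 - orb m (s+j)) / (m (s+j) : ℝ) := by
        rw [show s + (j+1) = (s+j) + 1 from rfl, orb_succ]
      interval_cases hMv : (m (s + j))
      · refine ⟨Or.inl (Or.inl ⟨orb m (s+j), hmem, ?_⟩), Set.mem_Ici.2 (le_of_lt (by
          rw [show s + (j+1) = s + j + 1 from rfl]; exact hnext_lo))⟩
        rw [hnext]; norm_num
      · refine ⟨Or.inl (Or.inr ⟨orb m (s+j), hmem, ?_⟩), Set.mem_Ici.2 (le_of_lt (by
          rw [show s + (j+1) = s + j + 1 from rfl]; exact hnext_lo))⟩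
        rw [hnext]; norm_num
      · refine ⟨Or.inr ⟨orb m (s+j), hmem, ?_⟩, Set.mem_Ici.2 (le_of_lt (by
          rw [show s + (j+1) = s + j + 1 from rfl]; exact hnext_lo))⟩
        rw [hnext]; norm_num
  have hkmem : orb m k ∈ Cs n := by
    have := key n (le_refl n)
    rwa [hsk] at this
  refine ⟨orb m k, hkmem, ?_⟩
  rw [Real.dist_eq, abs_lt]
  have hklo : L - δ < orb m k := lt_of_le_of_lt (le_max_right _ _) (hlo k (by omega))
  constructor <;> linarith

end Stmt13Aux

theorem stmt13 : volume (Lset ∩ Set.Icc (3/17 : ℝ) (1/3)) = 0 := by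
  have hsub : Lset ∩ Set.Icc (3/17 : ℝ) (1/3) ⊆ {(3/17 : ℝ)} ∪ ⋂ n, Stmt13Aux.Cs n := by
    rintro x ⟨hx, hIcc⟩
    rcases eq_or_lt_of_le hIcc.1 with h | h
    · exact Or.inl (by simp [← h])
    · exact Or.inr (Set.mem_iInter.2 (Stmt13Aux.mem_Cs_of_mem_Lset h hx))
  refine le_antisymm ?_ zero_le
  calc volume (Lset ∩ Set.Icc (3/17 : ℝ) (1/3)) ≤ volume ({(3/17 : ℝ)} ∪ ⋂ n, Stmt13Aux.Cs n) :=
        measure_mono hsub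
    _ ≤ volume {(3/17 : ℝ)} + volume (⋂ n, Stmt13Aux.Cs n) := measure_union_le _ _
    _ = 0 := by rw [Stmt13Aux.stmt13_measure, measure_singleton]; simp
end

section
/- Let (i_1,...,i_{2k+1}) be a finite sequence of integers ≥ 2 of odd length, and let (m_j) be a sequence of integers ≥ 2 such that (m_j, m_{j-1}, ..., m_{j-2k}) = (i_1,...,i_{2k+1}) for infinitely many j. Then liminf_{n→∞} T_{m_n}∘...∘T_{m_1}(0) ≤ Fix(T_{i_1}∘...∘T_{i_{2k+1}}), where Fix denotes the unique fixed point of the contraction. -/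
open Filter Set MeasureTheory

noncomputable def compW (i : ℕ → ℕ) : ℕ → ℝ → ℝ
  | 0, x => x
  | n + 1, x => T (i 0) (compW (fun t => i (t + 1)) n x)

lemma T_anti (m : ℕ) : Antitone (T m) := fun a b hab => by
  simp only [T, div_eq_mul_inv]
  exact mul_le_mul_of_nonneg_right (by linarith) (by positivity)

lemma compW_anti (k : ℕ) : ∀ i : ℕ → ℕ, Antitone (compW i (2 * k + 1)) := by
  induction k with
  | zero =>
    intro i a b h
    simpa [compW] using T_anti (i 0) h
  | succ k ih =>
    intro i a b h
    have h2 : 2 * (k + 1) + 1 = (2 * k + 1) + 1 + 1 := by ring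
    rw [h2]
    have e : ∀ x, compW i (2 * k + 1 + 1 + 1) x
        = T (i 0) (T (i (0 + 1)) (compW (fun t => i (t + 1 + 1)) (2 * k + 1) x)) :=
      fun x => rfl
    rw [e a, e b]
    exact T_anti _ (T_anti _ (ih _ h))

lemma orb_nonneg (m : ℕ → ℕ) (hm : ∀ j, 2 ≤ m j) : ∀ n, 0 ≤ orb m n ∧ orb m n ≤ 1 := by
  intro n
  induction n with
  | zero => simp [orb]
  | succ n ih =>
    have h2 : (2:ℝ) ≤ m n := by exact_mod_cast hm n
    simp only [orb, T]
    constructor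
    · apply div_nonneg (by linarith [ih.2]) (by linarith)
    · rw [div_le_one (by linarith)]
      linarith [ih.1]

lemma orb_comp (m : ℕ → ℕ) : ∀ (L : ℕ) (i : ℕ → ℕ) (j : ℕ), L ≤ j →
    (∀ s ≤ L, m (j - s) = i s) → orb m (j + 1) = compW i (L + 1) (orb m (j - L)) := by
  intro L
  induction L with
  | zero =>
    intro i j _ hs
    have h0 := hs 0 le_rfl
    simp only [Nat.sub_zero] at h0 ⊢
    show T (m j) (orb m j) = T (i 0) (orb m j)
    rw [h0]
  | succ L ih =>
    intro i j hj hs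
    have hj1 : 1 ≤ j := le_trans (by omega) hj
    have hmid : orb m j = compW (fun t => i (t + 1)) (L + 1) (orb m (j - 1 - L)) := by
      have h := ih (fun t => i (t + 1)) (j - 1) (by omega) ?_
      · rwa [Nat.sub_add_cancel hj1] at h
      · intro s hsL
        have h1 := hs (s + 1) (by omega)
        have : j - 1 - s = j - (s + 1) := by omega
        rw [this]
        exact h1
    have h0 := hs 0 (by omega)
    simp only [Nat.sub_zero] at h0
    have hsub : j - 1 - L = j - (L + 1) := by omega
    calc orb m (j + 1) = T (m j) (orb m j) := rfl
      _ = T (i 0) (compW (fun t => i (t + 1)) (L + 1) (orb m (j - (L + 1)))) := by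
          rw [hmid, h0, hsub]
      _ = compW i (L + 1 + 1) (orb m (j - (L + 1))) := rfl

theorem stmt14 (k : ℕ) (i : ℕ → ℕ) (hi : ∀ t, 2 ≤ i t)
    (m : ℕ → ℕ) (hm : ∀ j, 2 ≤ m j)
    (hocc : ∀ N, ∃ j, N ≤ j ∧ 2 * k ≤ j ∧ ∀ s ≤ 2 * k, m (j - s) = i s)
    (x0 : ℝ) (hx0 : compW i (2 * k + 1) x0 = x0) :
    Filter.atTop.liminf (fun n => orb m n) ≤ x0 := by
  apply Filter.liminf_le_of_frequently_le
  · rw [Filter.frequently_atTop]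
    intro N
    obtain ⟨j, hjN, hjk, hjs⟩ := hocc (N + 2 * k)
    by_cases hc : orb m (j - 2 * k) ≤ x0
    · exact ⟨j - 2 * k, by omega, hc⟩
    · refine ⟨j + 1, by omega, ?_⟩
      have key := orb_comp m (2 * k) i j (by omega) hjs
      rw [key]
      calc compW i (2 * k + 1) (orb m (j - 2 * k))
          ≤ compW i (2 * k + 1) x0 := compW_anti k i (le_of_lt (not_le.mp hc))
        _ = x0 := hx0
  · exact ⟨0, Filter.eventually_map.2 (Filter.Eventually.of_forall fun n => (orb_nonneg m hm n).1)⟩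
end

section
/- Let λ_n = Fix(T_{M^(n)}) be the fixed point of the composition T_{M_1}∘...∘T_{M_{l_n}} along the word M^(n), where M^(1) = (2), M^(2) = (3), M^(n) = M^(n-1)M^(n-2)M^(n-2). Then the sequence (λ_n)_{n≥1} is strictly decreasing and converges to λ_0 = Σ_{l=1}^∞ (-1)^{l-1}/(M_1 M_2 ⋯ M_l), where (M_1, M_2, ...) is the infinite word having each M^(n) as a prefix. -/
open Filter Set MeasureTheory

def Mword : ℕ → List ℕ
  | 0 => []
  | 1 => [2]
  | 2 => [3]
  | n + 3 => Mword (n + 2) ++ Mword (n + 1) ++ Mword (n + 1)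

noncomputable def compList (l : List ℕ) (x : ℝ) : ℝ := l.foldr (fun m y => T m y) x

/-- The infinite word M, indexed from 0, i.e. Minf k = M_{k+1}. -/
def Minf (k : ℕ) : ℕ := (Mword (k + 3)).getD k 0

/-! ### Auxiliary definitions and lemmas -/

noncomputable def Bw (l : List ℕ) : ℝ := (l.map (fun m => (-1 : ℝ)/m)).prod

noncomputable def useq (l : ℕ) : ℝ := (-1 : ℝ) ^ l / ∏ t ∈ Finset.range (l + 1), (Minf t : ℝ)

lemma compList_nil (x : ℝ) : compList [] x = x := rfl
lemma compList_cons (m : ℕ) (l : List ℕ) (x : ℝ) : compList (m :: l) x = T m (compList l x) := rfl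
lemma compList_append (l1 l2 : List ℕ) (x : ℝ) :
    compList (l1 ++ l2) x = compList l1 (compList l2 x) := by
  simp [compList, List.foldr_append]
lemma Bw_nil : Bw [] = 1 := rfl
lemma Bw_cons (m : ℕ) (l : List ℕ) : Bw (m :: l) = (-1/m) * Bw l := by simp [Bw]
lemma Bw_append (l1 l2 : List ℕ) : Bw (l1 ++ l2) = Bw l1 * Bw l2 := by simp [Bw]

lemma compList_affine (l : List ℕ) (x : ℝ) : compList l x = compList l 0 + Bw l * x := by
  induction l with
  | nil => simp [compList_nil, Bw_nil]
  | cons m l ih =>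
    rw [compList_cons, compList_cons, ih, Bw_cons, T, T]
    ring

lemma Bw_neg : ∀ n, 1 ≤ n → -1/2 ≤ Bw (Mword n) ∧ Bw (Mword n) < 0 := by
  intro n
  induction n using Nat.strong_induction_on with
  | _ n ih =>
    match n with
    | 0 => intro h; omega
    | 1 => intro _; norm_num [Bw, Mword]
    | 2 => intro _; norm_num [Bw, Mword]
    | (k+3) =>
      intro _
      have h1 := ih (k+1) (by omega) (by omega)
      have h2 := ih (k+2) (by omega) (by omega)
      have hrw : Mword (k+3) = Mword (k + 2) ++ Mword (k + 1) ++ Mword (k + 1) := rfl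
      rw [hrw, Bw_append, Bw_append]
      set b1 := Bw (Mword (k+1)) with hb1
      set b2 := Bw (Mword (k+2)) with hb2
      have hp : 0 < b2 * b1 := mul_pos_of_neg_of_neg h2.2 h1.2
      have h14 : b2 * b1 ≤ 1/4 := by nlinarith [h1.1, h1.2, h2.1, h2.2]
      refine ⟨?_, mul_neg_of_pos_of_neg hp h1.2⟩
      nlinarith [h14, hp, h1.1, h1.2]

lemma Bw_small : ∀ n, 1 ≤ n → |Bw (Mword n)| ≤ (2/3 : ℝ)^n := by
  intro n
  induction n using Nat.strong_induction_on with
  | _ n ih =>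
    match n with
    | 0 => intro h; omega
    | 1 =>
      intro _
      rw [show Bw (Mword 1) = -1/2 by norm_num [Bw, Mword]]
      rw [show |(-1/2 : ℝ)| = 1/2 by rw [abs_of_nonpos (by norm_num)]; norm_num]
      norm_num
    | 2 =>
      intro _
      rw [show Bw (Mword 2) = -1/3 by norm_num [Bw, Mword]]
      rw [show |(-1/3 : ℝ)| = 1/3 by rw [abs_of_nonpos (by norm_num)]; norm_num]
      norm_num
    | (k+3) =>
      intro _
      have h1 : |Bw (Mword (k+1))| ≤ (2/3:ℝ)^(k+1) := ih (k+1) (by omega) (by omega)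
      have h2 : |Bw (Mword (k+2))| ≤ (2/3:ℝ)^(k+2) := ih (k+2) (by omega) (by omega)
      have hrw : Mword (k+3) = Mword (k + 2) ++ Mword (k + 1) ++ Mword (k + 1) := rfl
      rw [hrw, Bw_append, Bw_append, abs_mul, abs_mul]
      have hle : (2/3:ℝ)^(k+2) * (2/3)^(k+1) * (2/3)^(k+1) ≤ (2/3)^(k+3) := by
        rw [← pow_add, ← pow_add]
        apply pow_le_pow_of_le_one (by norm_num) (by norm_num)
        omega
      have n1 : (0:ℝ) ≤ |Bw (Mword (k+1))| := abs_nonneg _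
      have p1 : (0:ℝ) ≤ (2/3:ℝ)^(k+2) := by positivity
      calc |Bw (Mword (k+2))| * |Bw (Mword (k+1))| * |Bw (Mword (k+1))|
          ≤ (2/3:ℝ)^(k+2) * (2/3)^(k+1) * (2/3)^(k+1) := by
            apply mul_le_mul (mul_le_mul h2 h1 n1 p1) h1 n1 (by positivity)
        _ ≤ _ := hle

lemma mem_Mword : ∀ n, ∀ m ∈ Mword n, m = 2 ∨ m = 3 := by
  intro n
  induction n using Nat.strong_induction_on with
  | _ n ih =>
    match n with
    | 0 => simp [Mword]
    | 1 => simp [Mword]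
    | 2 => simp [Mword]
    | (k+3) =>
      intro m hm
      have hrw : Mword (k+3) = Mword (k + 2) ++ Mword (k + 1) ++ Mword (k + 1) := rfl
      rw [hrw] at hm
      simp only [List.mem_append] at hm
      rcases hm with (h | h) | h
      · exact ih (k+2) (by omega) m h
      · exact ih (k+1) (by omega) m h
      · exact ih (k+1) (by omega) m h

lemma len_pos : ∀ n, 1 ≤ n → 1 ≤ (Mword n).length := by
  intro n
  induction n using Nat.strong_induction_on with
  | _ n ih =>
    match n with
    | 0 => intro h; omega
    | 1 => intro _; simp [Mword]
    | 2 => intro _; simp [Mword]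
    | (k+3) =>
      intro _
      have h2 : 1 ≤ (Mword (k+2)).length := ih (k+2) (by omega) (by omega)
      have hrw : Mword (k+3) = Mword (k + 2) ++ Mword (k + 1) ++ Mword (k + 1) := rfl
      rw [hrw]; simp; omega

lemma len_ge : ∀ n, n ≤ (Mword (n+2)).length := by
  intro n
  induction n using Nat.strong_induction_on with
  | _ n ih =>
    match n with
    | 0 => simp
    | 1 => simp [Mword]
    | (k+2) =>
      have h1 : k+1 ≤ (Mword (k+3)).length := ih (k+1) (by omega)
      have hp : 1 ≤ (Mword (k+2)).length := len_pos (k+2) (by omega)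
      have hrw : Mword (k+4) = Mword (k + 3) ++ Mword (k + 2) ++ Mword (k + 2) := rfl
      show k+2 ≤ (Mword (k+4)).length
      rw [hrw]; simp; omega

lemma getD_prefix {l l' : List ℕ} (h : l <+: l') {j : ℕ} (hj : j < l.length) :
    l'.getD j 0 = l.getD j 0 := by
  obtain ⟨t, rfl⟩ := h
  rw [List.getD_eq_getElem _ _ (by simp; omega), List.getD_eq_getElem _ _ hj]
  exact List.getElem_append_left hj

lemma prefix_succ : ∀ n, 2 ≤ n → Mword n <+: Mword (n+1) := by
  intro n hn
  match n, hn with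
  | 2, _ => decide
  | (k+3), _ =>
    have hrw : Mword (k+4) = Mword (k + 3) ++ Mword (k + 2) ++ Mword (k + 2) := rfl
    rw [hrw, List.append_assoc]
    exact List.prefix_append _ _

lemma prefix_mono : ∀ a b, 2 ≤ a → a ≤ b → Mword a <+: Mword b := by
  intro a b ha hab
  induction b, hab using Nat.le_induction with
  | base => exact List.prefix_refl _
  | succ b hb ih => exact ih.trans (prefix_succ b (by omega))

lemma Minf_eq : ∀ n, 2 ≤ n → ∀ j, j < (Mword n).length → (Mword n).getD j 0 = Minf j := by
  intro n hn j hj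
  unfold Minf
  rcases le_or_gt n (j+3) with h | h
  · have hp := prefix_mono n (j+3) hn h
    exact (getD_prefix hp hj).symm
  · have hp := prefix_mono (j+3) n (by omega) (by omega)
    have hj3 : j < (Mword (j+3)).length := by
      have h4 : j+1 ≤ (Mword (j+3)).length := len_ge (j+1); omega
    exact (getD_prefix hp hj3) ▸ rfl

lemma Minf_mem : ∀ k, Minf k = 2 ∨ Minf k = 3 := by
  intro k
  have hk : k < (Mword (k+3)).length := by
    have h4 : k+1 ≤ (Mword (k+3)).length := len_ge (k+1); omega
  have hrw : Minf k = (Mword (k+3)).getD k 0 := rfl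
  rw [hrw, List.getD_eq_getElem _ _ hk]
  exact mem_Mword (k+3) _ (List.getElem_mem hk)

lemma Minf_ge2 (k : ℕ) : 2 ≤ Minf k := by rcases Minf_mem k with h | h <;> omega

lemma prod_Minf_pos (k : ℕ) : 0 < ∏ t ∈ Finset.range k, (Minf t : ℝ) := by
  apply Finset.prod_pos
  intro t _
  have := Minf_ge2 t
  positivity

lemma prod_Minf_ge (k : ℕ) : (2:ℝ)^k ≤ ∏ t ∈ Finset.range k, (Minf t : ℝ) := by
  calc (2:ℝ)^k = ∏ t ∈ Finset.range k, (2:ℝ) := by simp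
    _ ≤ _ := Finset.prod_le_prod (by intros; norm_num) (by
        intro t _
        exact_mod_cast Minf_ge2 t)

lemma useq_abs (l : ℕ) : |useq l| ≤ (1/2:ℝ)^l := by
  have hp := prod_Minf_pos (l+1)
  have hge := prod_Minf_ge (l+1)
  have h2 : (0:ℝ) < 2^(l+1) := by positivity
  rw [useq, abs_div, abs_pow, abs_neg, abs_one, one_pow, abs_of_pos hp]
  rw [div_le_iff₀ hp]
  calc (1:ℝ) ≤ (1/2)^l * 2^(l+1) := by
        have he : (1/2:ℝ)^l * 2^(l+1) = 2 := by
          rw [pow_succ, ← mul_assoc, ← mul_pow]; norm_num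
        rw [he]; norm_num
    _ ≤ _ := by
        apply mul_le_mul_of_nonneg_left hge (by positivity)

lemma useq_summable : Summable useq := by
  apply Summable.of_abs
  apply Summable.of_nonneg_of_le (fun l => abs_nonneg _) useq_abs
  exact summable_geometric_of_lt_one (by norm_num) (by norm_num)

lemma A_formula : ∀ (l : List ℕ), (∀ j, j < l.length → l.getD j 0 = Minf j) →
    compList l 0 = ∑ j ∈ Finset.range l.length, useq j ∧
    Bw l = (-1:ℝ)^l.length / ∏ t ∈ Finset.range l.length, (Minf t : ℝ) := by
  intro l
  induction l using List.reverseRecOn with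
  | nil => intro _; simp [compList, Bw]
  | append_singleton l m ih =>
    intro h
    have hlen : ∀ j, j < l.length → l.getD j 0 = Minf j := by
      intro j hj
      have h1 := h j (by simp; omega)
      rwa [List.getD_eq_getElem _ _ (by simp; omega), List.getElem_append_left hj,
        ← List.getD_eq_getElem _ _ hj] at h1
    have hm : m = Minf l.length := by
      have h1 := h l.length (by simp)
      rw [List.getD_eq_getElem _ _ (by simp)] at h1
      simpa using h1
    obtain ⟨hA, hB⟩ := ih hlen
    have hp := prod_Minf_pos l.length
    have hm0 : (m:ℝ) ≠ 0 := by
      have := Minf_ge2 l.length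
      rw [hm]; positivity
    have hBm : Bw [m] = -1/m := by simp [Bw]
    have hAm : compList [m] 0 = 1/m := by simp [compList, T]
    constructor
    · rw [compList_append, hAm, compList_affine l (1/m), hB]
      rw [List.length_append, List.length_singleton, Finset.sum_range_succ, hA]
      congr 1
      rw [useq, Finset.prod_range_succ, ← hm]
      field_simp
    · rw [Bw_append, hB, hBm, List.length_append, List.length_singleton,
        Finset.prod_range_succ, ← hm, pow_succ]
      field_simp

theorem stmt18 (lam : ℕ → ℝ)
    (hfix : ∀ n, 1 ≤ n → compList (Mword n) (lam n) = lam n) :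
    (∀ n, 1 ≤ n → lam (n + 1) < lam n) ∧
      Filter.Tendsto lam Filter.atTop
        (nhds (∑' l : ℕ, (-1 : ℝ) ^ l / ∏ t ∈ Finset.range (l + 1), (Minf t : ℝ))) := by
  -- fixed point equations
  have heq : ∀ n, 1 ≤ n → lam n = compList (Mword n) 0 + Bw (Mword n) * lam n := by
    intro n hn
    conv_lhs => rw [← hfix n hn, compList_affine]
  -- base values
  have hl1 : lam 1 = 1/3 := by
    have e := heq 1 le_rfl
    rw [show Mword 1 = [2] from rfl] at e
    rw [show compList [2] (0:ℝ) = 1/2 by simp [compList, T]] at e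
    rw [show Bw [2] = -1/2 by norm_num [Bw]] at e
    linarith
  have hl2 : lam 2 = 1/4 := by
    have e := heq 2 (by norm_num)
    rw [show Mword 2 = [3] from rfl] at e
    rw [show compList [3] (0:ℝ) = 1/3 by norm_num [compList, T]] at e
    rw [show Bw [3] = -1/3 by norm_num [Bw]] at e
    linarith
  -- monotonicity
  have hmono : ∀ n, 1 ≤ n → lam (n + 1) < lam n := by
    intro n hn
    induction n, hn using Nat.le_induction with
    | base => rw [hl1, hl2]; norm_num
    | succ n hn ih =>
      obtain ⟨k, rfl⟩ : ∃ k, n = k + 1 := ⟨n - 1, by omega⟩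
      set A0 := compList (Mword (k+1)) 0 with hA0d
      set b0 := Bw (Mword (k+1)) with hb0d
      set A1 := compList (Mword (k+2)) 0 with hA1d
      set b1 := Bw (Mword (k+2)) with hb1d
      have hb0 := Bw_neg (k+1) (by omega)
      have hb1 := Bw_neg (k+2) (by omega)
      have e0 := heq (k+1) (by omega)
      have e1 := heq (k+2) (by omega)
      have e2 := heq (k+3) (by omega)
      have hrw : Mword (k+3) = Mword (k + 2) ++ Mword (k + 1) ++ Mword (k + 1) := rfl
      have hA2 : compList (Mword (k+3)) 0 = A1 + b1 * (A0 + b0 * A0) := by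
        rw [hrw, compList_append, compList_append, compList_affine (Mword (k+1)) (compList (Mword (k+1)) 0), compList_affine (Mword (k+2))]
      have hb2 : Bw (Mword (k+3)) = b1 * (b0 * b0) := by
        rw [hrw, Bw_append, Bw_append, mul_assoc]
      rw [hA2, hb2] at e2
      -- abbreviations
      set u := lam (k+1)
      set v := lam (k+2)
      set W := lam (k+3)
      show W < v
      have hgg : A0 + b0*A0 + b0*b0*v - v = (1 - b0*b0)*(u - v) := by
        linear_combination (-(1+b0)) * e0
      have hb0sq : 0 < 1 - b0*b0 := by nlinarith [hb0.1, hb0.2]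
      have hggpos : 0 < A0 + b0*A0 + b0*b0*v - v := by
        rw [hgg]
        exact mul_pos hb0sq (by linarith [ih])
      have hfvneg : A1 + b1 * (A0 + b0 * A0) + b1*(b0*b0) * v - v < 0 := by
        have : A1 + b1 * (A0 + b0 * A0) + b1*(b0*b0) * v - v
            = b1 * (A0 + b0*A0 + b0*b0*v - v) := by linear_combination (-1) * e1
        rw [this]
        exact mul_neg_of_neg_of_pos hb1.2 hggpos
      have hW : A1 + b1 * (A0 + b0 * A0) + b1*(b0*b0) * v - v
          = (b1*(b0*b0) - 1) * (v - W) := by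
        linear_combination (-1) * e2
      have hb2neg : b1*(b0*b0) - 1 < 0 := by
        have : b1*(b0*b0) < 0 :=
          mul_neg_of_neg_of_pos hb1.2 (mul_pos_of_neg_of_neg hb0.2 hb0.2)
        linarith
      by_contra hcon
      push_neg at hcon
      have h1 : 0 ≤ (b1*(b0*b0) - 1) * (v - W) := by
        calc (0:ℝ) ≤ (-(b1*(b0*b0) - 1)) * (-(v - W)) :=
              mul_nonneg (by linarith) (by linarith)
          _ = (b1*(b0*b0) - 1) * (v - W) := by ring
      rw [← hW] at h1
      linarith
  refine ⟨hmono, ?_⟩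
  -- convergence
  set L := ∑' l, useq l with hLd
  have hS : Filter.Tendsto (fun k => ∑ j ∈ Finset.range k, useq j) Filter.atTop (nhds L) :=
    useq_summable.hasSum.tendsto_sum_nat
  have hlen_t : Filter.Tendsto (fun n => (Mword n).length) Filter.atTop Filter.atTop := by
    apply tendsto_atTop_mono (f := fun n => n - 2)
    · intro n
      match n with
      | 0 => simp
      | 1 => simp
      | (k+2) => simpa using len_ge k
    · exact tendsto_sub_atTop_nat 2
  have hA : Filter.Tendsto (fun n => compList (Mword n) 0) Filter.atTop (nhds L) := by
    apply Filter.Tendsto.congr' _ (hS.comp hlen_t)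
    filter_upwards [Filter.eventually_ge_atTop 2] with n hn
    exact ((A_formula (Mword n) (Minf_eq n hn)).1).symm
  have hB : Filter.Tendsto (fun n => Bw (Mword n)) Filter.atTop (nhds 0) := by
    apply squeeze_zero_norm' _ (tendsto_pow_atTop_nhds_zero_of_lt_one (by norm_num : (0:ℝ) ≤ 2/3) (by norm_num))
    filter_upwards [Filter.eventually_ge_atTop 1] with n hn
    exact Bw_small n hn
  have hdiv : Filter.Tendsto (fun n => compList (Mword n) 0 / (1 - Bw (Mword n)))
      Filter.atTop (nhds (L / (1 - 0))) :=
    hA.div (tendsto_const_nhds.sub hB) (by norm_num)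
  rw [show L / (1 - 0) = L by norm_num] at hdiv
  have hgoal : Filter.Tendsto lam Filter.atTop (nhds L) := by
    apply Filter.Tendsto.congr' _ hdiv
    filter_upwards [Filter.eventually_ge_atTop 1] with n hn
    have e := heq n hn
    have hb := (Bw_neg n hn).2
    rw [div_eq_iff (by linarith : (1:ℝ) - Bw (Mword n) ≠ 0)]
    linear_combination -e
  exact hgoal
end
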